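/- arXiv:1304.7999 — 2 statements merged into one kernel-verified Lean document; each statement's English description precedes it below -/
import Mathlib

section
/- Let A be a finite arrangement of affine hyperplanes in ℝⁿ. Then the number of regions of A (the connected components of the complement ℝⁿ \ ⋃_{H ∈ A} H) equals the sum, over all elements x of the intersection semilattice L(A), of the absolute value of the Möbius function |μ(0̂, x)|, where 0̂ = ℝⁿ is the minimal element of L(A). -/
/-- A set `H ⊆ ℝⁿ` is an affine hyperplane if it is the zero set of a
nontrivial affine-linear equation `∑ i, a i * x i = b` with `a ≠ 0`. -/
def IsAffineHyperplane {n : ℕ} (H : Set (Fin n → ℝ)) : Prop :=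
  ∃ (a : Fin n → ℝ) (b : ℝ), a ≠ 0 ∧ H = {x | ∑ i, a i * x i = b}

/-- The intersection semilattice `L(A)` of an arrangement `A`: all nonempty
intersections `⋂_{H ∈ B} H` for `B ⊆ A` (the empty intersection being `ℝⁿ`). -/
def IntersectionPoset {n : ℕ} (A : Finset (Set (Fin n → ℝ))) : Type :=
  {S : Set (Fin n → ℝ) //
    S.Nonempty ∧ ∃ B : Finset (Set (Fin n → ℝ)), B ⊆ A ∧ S = ⋂ H ∈ B, (H : Set (Fin n → ℝ))}

/-- `L(A)` is partially ordered by reverse inclusion. -/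
instance {n : ℕ} (A : Finset (Set (Fin n → ℝ))) : PartialOrder (IntersectionPoset A) where
  le S T := T.1 ⊆ S.1
  le_refl S := subset_rfl
  le_trans S T U h₁ h₂ := Set.Subset.trans h₂ h₁
  le_antisymm S T h₁ h₂ := Subtype.ext (subset_antisymm h₂ h₁)

instance {n : ℕ} (A : Finset (Set (Fin n → ℝ))) : Finite (IntersectionPoset A) := by
  have h : {S : Set (Fin n → ℝ) |
      S.Nonempty ∧ ∃ B : Finset (Set (Fin n → ℝ)), B ⊆ A ∧ S = ⋂ H ∈ B, (H : Set (Fin n → ℝ))}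
      ⊆ (fun B : Finset (Set (Fin n → ℝ)) => ⋂ H ∈ B, (H : Set (Fin n → ℝ))) ''
        (A.powerset : Set (Finset (Set (Fin n → ℝ)))) := by
    rintro S ⟨-, B, hBA, rfl⟩
    exact ⟨B, by simpa using hBA, rfl⟩
  exact ((A.powerset.finite_toSet.image _).subset h).to_subtype

noncomputable instance {n : ℕ} (A : Finset (Set (Fin n → ℝ))) :
    Fintype (IntersectionPoset A) := Fintype.ofFinite _

noncomputable instance {n : ℕ} (A : Finset (Set (Fin n → ℝ))) :
    LocallyFiniteOrder (IntersectionPoset A) := by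
  classical exact Fintype.toLocallyFiniteOrder

/-- The minimal element `0̂ = ℝⁿ` of `L(A)` (the empty intersection). -/
def IntersectionPoset.bot {n : ℕ} (A : Finset (Set (Fin n → ℝ))) : IntersectionPoset A :=
  ⟨Set.univ, Set.univ_nonempty, ∅, by simp, by simp⟩


open Finset Set

namespace Zas

open scoped Classical

variable {n : ℕ}

/-- the linear functional `x ↦ ∑ i, a i * x i`. -/
def dmap (a : Fin n → ℝ) : (Fin n → ℝ) →ₗ[ℝ] ℝ where
  toFun x := ∑ i, a i * x i
  map_add' x y := by simp [mul_add, Finset.sum_add_distrib]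
  map_smul' t x := by simp [Finset.mul_sum, mul_left_comm]

lemma dmap_apply (a x : Fin n → ℝ) : dmap a x = ∑ i, a i * x i := rfl

lemma dmap_cont (a : Fin n → ℝ) : Continuous (dmap a) := by
  show Continuous fun x : Fin n → ℝ => ∑ i, a i * x i; simpa [dmap_apply] using
    (continuous_finset_sum (Finset.univ : Finset (Fin n))
      (fun i _ => (continuous_const.mul (continuous_apply i))))

/-- `S` is an affine flat with direction `W`. -/
def IsFlat (S : Set (Fin n → ℝ)) (W : Submodule ℝ (Fin n → ℝ)) : Prop :=
  ∃ p, S = {z | z - p ∈ W}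

lemma IsFlat.nonempty {S : Set (Fin n → ℝ)} {W} (h : IsFlat S W) : S.Nonempty := by
  obtain ⟨p, rfl⟩ := h
  exact ⟨p, by simp⟩

lemma IsFlat.rebase {S : Set (Fin n → ℝ)} {W} (h : IsFlat S W) {q} (hq : q ∈ S) :
    S = {z | z - q ∈ W} := by
  obtain ⟨p, rfl⟩ := h
  have hqp : q - p ∈ W := hq
  ext z
  constructor
  · intro hz
    have : (z - p) - (q - p) ∈ W := W.sub_mem hz hqp
    simpa [sub_sub_sub_cancel_right] using this
  · intro hz
    have : (z - q) + (q - p) ∈ W := W.add_mem hz hqp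
    simpa [sub_add_sub_cancel] using this

lemma IsFlat.unique {S : Set (Fin n → ℝ)} {W W'} (h : IsFlat S W) (h' : IsFlat S W') :
    W = W' := by
  obtain ⟨p, hp⟩ := h
  have hpS : p ∈ S := by rw [hp]; simp
  have h2 := h'.rebase hpS
  ext w
  constructor
  · intro hw
    have : p + w ∈ S := by rw [hp]; simpa using hw
    rw [h2] at this; simpa using this
  · intro hw
    have : p + w ∈ S := by rw [h2]; simpa using hw
    rw [hp] at this; simpa using this

lemma IsFlat.convex {S : Set (Fin n → ℝ)} {W} (h : IsFlat S W) : Convex ℝ S := by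
  obtain ⟨p, rfl⟩ := h
  intro x hx y hy u v hu hv huv
  have hv' : v = 1 - u := by linarith
  subst hv'
  have : (u • x + (1 - u) • y) - p = u • (x - p) + (1 - u) • (y - p) := by module
  show (u • x + (1 - u) • y) - p ∈ W
  rw [this]
  exact W.add_mem (W.smul_mem _ hx) (W.smul_mem _ hy)

lemma IsFlat.univ : IsFlat (Set.univ : Set (Fin n → ℝ)) ⊤ := ⟨0, by simp⟩

lemma IsFlat.inter {S T : Set (Fin n → ℝ)} {W U} (hS : IsFlat S W) (hT : IsFlat T U)
    (hne : (S ∩ T).Nonempty) : IsFlat (S ∩ T) (W ⊓ U) := by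
  obtain ⟨p, hp⟩ := hne
  refine ⟨p, ?_⟩
  rw [hS.rebase hp.1, hT.rebase hp.2]
  ext z; simp only [Set.mem_inter_iff, Set.mem_setOf_eq, Submodule.mem_inf]

lemma isFlat_hyp {a : Fin n → ℝ} {b : ℝ} (hne : ({x | dmap a x = b} : Set _).Nonempty) :
    IsFlat {x | dmap a x = b} (LinearMap.ker (dmap a)) := by
  obtain ⟨p, hp⟩ := hne
  refine ⟨p, ?_⟩
  ext z
  simp only [Set.mem_setOf_eq, LinearMap.mem_ker, map_sub]
  constructor
  · intro h; rw [h, hp]; ring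
  · intro h
    have : dmap a z = dmap a p := by linarith
    rw [this, hp]

lemma IsFlat.le {S T : Set (Fin n → ℝ)} {W U} (hS : IsFlat S W) (hT : IsFlat T U)
    (hST : S ⊆ T) : W ≤ U := by
  obtain ⟨p, hp⟩ := hS
  have hpS : p ∈ S := by rw [hp]; simp
  have h2 := hT.rebase (hST hpS)
  intro w hw
  have : p + w ∈ S := by rw [hp]; simpa using hw
  have := hST this
  rw [h2] at this
  simpa using this

lemma IsFlat.eq_of_dir_eq {S T : Set (Fin n → ℝ)} {W} (hS : IsFlat S W) (hT : IsFlat T W)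
    (hST : S ⊆ T) : S = T := by
  obtain ⟨p, hp⟩ := hS
  have hpS : p ∈ S := by rw [hp]; simp
  rw [hp, hT.rebase (hST hpS)]

lemma IsFlat.eq_of_subset_of_finrank_le {S T : Set (Fin n → ℝ)} {W U} (hS : IsFlat S W)
    (hT : IsFlat T U) (hST : S ⊆ T)
    (hd : Module.finrank ℝ U ≤ Module.finrank ℝ W) : S = T := by
  have hle := hS.le hT hST
  have : W = U := Submodule.eq_of_le_of_finrank_le hle hd
  exact hS.eq_of_dir_eq (this ▸ hT) hST

/-- dimension of a set, as the rank of its `vectorSpan`. -/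
noncomputable def edim (S : Set (Fin n → ℝ)) : ℕ := Module.finrank ℝ (vectorSpan ℝ S)

lemma IsFlat.vectorSpan_eq {S : Set (Fin n → ℝ)} {W} (h : IsFlat S W) :
    vectorSpan ℝ S = W := by
  obtain ⟨p, hp⟩ := h
  have hset : S -ᵥ S = (W : Set (Fin n → ℝ)) := by
    ext w
    constructor
    · rintro ⟨x, hx, y, hy, rfl⟩
      rw [hp] at hx hy
      have := W.sub_mem hx hy
      simpa [vsub_eq_sub, sub_sub_sub_cancel_right] using this
    · intro hw
      refine ⟨p + w, ?_, p, ?_, by simp [vsub_eq_sub]⟩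
      · rw [hp]; simpa using hw
      · rw [hp]; simp
  rw [vectorSpan, hset, Submodule.span_eq]

lemma IsFlat.edim_eq {S : Set (Fin n → ℝ)} {W} (h : IsFlat S W) :
    edim S = Module.finrank ℝ W := by rw [edim, h.vectorSpan_eq]

lemma finrank_inf_ker_ge (W : Submodule ℝ (Fin n → ℝ)) (f : (Fin n → ℝ) →ₗ[ℝ] ℝ) :
    Module.finrank ℝ W ≤ Module.finrank ℝ (W ⊓ LinearMap.ker f : Submodule ℝ (Fin n → ℝ)) + 1 := by
  classical
  have h1 := LinearMap.finrank_range_add_finrank_ker (f.domRestrict W)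
  have hker : LinearMap.ker (f.domRestrict W) = Submodule.comap W.subtype (W ⊓ LinearMap.ker f) := by
    ext x
    simp [LinearMap.mem_ker, LinearMap.domRestrict_apply, Submodule.mem_comap]
  have h2 : Module.finrank ℝ (LinearMap.ker (f.domRestrict W)) =
      Module.finrank ℝ (W ⊓ LinearMap.ker f : Submodule ℝ (Fin n → ℝ)) := by
    rw [hker]
    exact (Submodule.comapSubtypeEquivOfLe inf_le_left).finrank_eq
  have h3 : Module.finrank ℝ (LinearMap.range (f.domRestrict W)) ≤ 1 := by
    have := Submodule.finrank_le (LinearMap.range (f.domRestrict W))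
    simpa using this
  omega

/-- `K` is a relative hyperplane of the flat `E`. -/
def RelHyp (E K : Set (Fin n → ℝ)) : Prop :=
  ∃ a b, K = E ∩ {x | dmap a x = b} ∧ K.Nonempty ∧ ¬ E ⊆ {x | dmap a x = b}

lemma RelHyp.subset {E K : Set (Fin n → ℝ)} (h : RelHyp E K) : K ⊆ E := by
  obtain ⟨a, b, rfl, -, -⟩ := h; exact Set.inter_subset_left

lemma RelHyp.flat {E K : Set (Fin n → ℝ)} {W} (h : RelHyp E K) (hE : IsFlat E W) :
    ∃ WK, IsFlat K WK ∧ Module.finrank ℝ WK + 1 = Module.finrank ℝ W := by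
  obtain ⟨a, b, hK, hne, hns⟩ := h
  have hHne : ({x | dmap a x = b} : Set _).Nonempty := by
    obtain ⟨p, hp⟩ := hne; exact ⟨p, (hK ▸ hp).2⟩
  have hHflat := isFlat_hyp hHne
  have hKflat : IsFlat K (W ⊓ LinearMap.ker (dmap a)) := hK ▸ hE.inter hHflat (hK ▸ hne)
  refine ⟨W ⊓ LinearMap.ker (dmap a), hKflat, ?_⟩
  have hlt : W ⊓ LinearMap.ker (dmap a) < W := by
    rcases lt_or_eq_of_le (inf_le_left : W ⊓ LinearMap.ker (dmap a) ≤ W) with h | h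
    · exact h
    · exfalso
      apply hns
      obtain ⟨p, hp⟩ := hne
      have hpE : p ∈ E := (hK ▸ hp).1
      have hpH : dmap a p = b := (hK ▸ hp).2
      intro z hz
      have : z - p ∈ W := by rw [hE.rebase hpE] at hz; exact hz
      rw [← h] at this
      have : dmap a (z - p) = 0 := this.2
      simp only [map_sub] at this
      show dmap a z = b
      linarith [hpH]
  have h1 : Module.finrank ℝ (W ⊓ LinearMap.ker (dmap a) : Submodule ℝ (Fin n → ℝ)) <
      Module.finrank ℝ W := Submodule.finrank_lt_finrank_of_lt hlt
  have h2 := finrank_inf_ker_ge W (dmap a)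
  omega

lemma RelHyp.edim_succ {E K : Set (Fin n → ℝ)} {W} (h : RelHyp E K) (hE : IsFlat E W) :
    edim K + 1 = edim E := by
  obtain ⟨WK, hKflat, hrk⟩ := h.flat hE
  rw [hKflat.edim_eq, hE.edim_eq]; exact hrk

lemma RelHyp.ssubset {E K : Set (Fin n → ℝ)} {W} (h : RelHyp E K) (hE : IsFlat E W) :
    K ≠ E := by
  intro hKE
  obtain ⟨WK, hKflat, hrk⟩ := h.flat hE
  have heq := hKflat.unique (hKE ▸ hE)
  rw [heq] at hrk
  omega

/-- traces of relative hyperplanes on other relative hyperplanes. -/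
lemma RelHyp.trace {E K K' : Set (Fin n → ℝ)} {W} (hE : IsFlat E W)
    (h : RelHyp E K) (h' : RelHyp E K') (hne : K ≠ K') (hKK' : (K' ∩ K).Nonempty) :
    RelHyp K (K' ∩ K) := by
  have hflatK := h.flat hE
  have hflatK' := h'.flat hE
  obtain ⟨a', b', hK', hne', hns'⟩ := h'
  refine ⟨a', b', ?_, hKK', ?_⟩
  · rw [hK']
    have := h.subset
    ext z
    simp only [Set.mem_inter_iff, Set.mem_setOf_eq]
    constructor
    · rintro ⟨⟨-, h2⟩, h3⟩; exact ⟨h3, h2⟩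
    · rintro ⟨h1, h2⟩; exact ⟨⟨this h1, h2⟩, h1⟩
  · intro hsub
    apply hne
    have hKsubK' : K ⊆ K' := by
      rw [hK']
      intro z hz
      exact ⟨h.subset hz, hsub hz⟩
    obtain ⟨WK, hKflat, hrkK⟩ := hflatK
    obtain ⟨WK', hK'flat, hrkK'⟩ := hflatK'
    exact hKflat.eq_of_subset_of_finrank_le hK'flat hKsubK' (by omega)

lemma crossing {dx dy : ℝ} (h1 : 0 < dx) (h2 : dy < 0) :
    ∃ u v : ℝ, 0 ≤ u ∧ 0 ≤ v ∧ u + v = 1 ∧ u * dx + v * dy = 0 := by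
  have hd : 0 < dx - dy := by linarith
  have hdy' : 0 < -dy := by linarith
  refine ⟨-dy / (dx - dy), dx / (dx - dy), by positivity, by positivity, ?_, ?_⟩
  · field_simp
    ring
  · field_simp
    ring

lemma dmap_combo (a : Fin n → ℝ) (b : ℝ) (x y : Fin n → ℝ) {u v : ℝ} (huv : u + v = 1) :
    dmap a (u • x + v • y) - b = u * (dmap a x - b) + v * (dmap a y - b) := by
  simp only [map_add, map_smul, smul_eq_mul]
  have : u * b + v * b = b := by rw [← add_mul, huv, one_mul]
  linarith [this]

lemma combo_pos {dx dy u v : ℝ} (hdx : 0 < dx) (hdy : 0 < dy) (hu : 0 ≤ u) (hv : 0 ≤ v)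
    (huv : u + v = 1) : 0 < u * dx + v * dy := by
  rcases eq_or_lt_of_le hu with h | h
  · have : v = 1 := by linarith
    rw [← h, this]; simpa using hdy
  · nlinarith

/-- The key equivalence between the segment and the sign characterizations of sides. -/
lemma seg_iff {E : Set (Fin n → ℝ)} (hE : Convex ℝ E) (a : Fin n → ℝ) (b : ℝ)
    {x y : Fin n → ℝ} (hx : x ∈ E) (hy : y ∈ E) (hdx : dmap a x ≠ b) :
    segment ℝ x y ∩ (E ∩ {z | dmap a z = b}) = ∅ ↔
      (dmap a y ≠ b ∧ (0 < dmap a y - b ↔ 0 < dmap a x - b)) := by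
  constructor
  · intro h
    have hyK : dmap a y ≠ b := by
      intro hyb
      have : y ∈ segment ℝ x y ∩ (E ∩ {z | dmap a z = b}) :=
        ⟨right_mem_segment ℝ x y, hy, hyb⟩
      rw [h] at this; exact this
    refine ⟨hyK, ?_⟩
    by_contra hsig
    have key : ∀ dx dy : ℝ, 0 < dx → dy < 0 →
        (dmap a x - b = dx ∧ dmap a y - b = dy) ∨ (dmap a x - b = dy ∧ dmap a y - b = dx) →
        False := by
      intro dx dy h1 h2 hc
      obtain ⟨u, v, hu, hv, huv, hz⟩ := crossing h1 h2
      rcases hc with ⟨e1, e2⟩ | ⟨e1, e2⟩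
      · have : dmap a (u • x + v • y) = b := by
          have := dmap_combo a b x y huv; rw [e1, e2] at this; linarith
        have : u • x + v • y ∈ segment ℝ x y ∩ (E ∩ {z | dmap a z = b}) :=
          ⟨⟨u, v, hu, hv, huv, rfl⟩, hE hx hy hu hv huv, this⟩
        rw [h] at this; exact this
      · have huv' : v + u = 1 := by linarith
        have : dmap a (v • x + u • y) = b := by
          have := dmap_combo a b x y huv'; rw [e1, e2] at this; linarith
        have : v • x + u • y ∈ segment ℝ x y ∩ (E ∩ {z | dmap a z = b}) :=
          ⟨⟨v, u, hv, hu, huv', rfl⟩, hE hx hy hv hu huv', this⟩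
        rw [h] at this; exact this
    rcases lt_or_gt_of_ne (sub_ne_zero_of_ne hdx) with h1 | h1 <;>
      rcases lt_or_gt_of_ne (sub_ne_zero_of_ne hyK) with h2 | h2
    · exact hsig ⟨fun h => absurd h (by linarith), fun h => absurd h (by linarith)⟩
    · exact key _ _ h2 h1 (Or.inr ⟨rfl, rfl⟩)
    · exact key _ _ h1 h2 (Or.inl ⟨rfl, rfl⟩)
    · exact hsig ⟨fun _ => h1, fun _ => h2⟩
  · rintro ⟨hdy, hsig⟩
    ext z
    simp only [Set.mem_inter_iff, Set.mem_empty_iff_false, iff_false, not_and]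
    rintro ⟨u, v, hu, hv, huv, rfl⟩ hzE hzb
    have hcombo := dmap_combo a b x y huv
    rw [hzb] at hcombo
    have hz0 : u * (dmap a x - b) + v * (dmap a y - b) = 0 := by linarith
    rcases lt_or_gt_of_ne (sub_ne_zero_of_ne hdx) with h1 | h1
    · have h2 : dmap a y - b < 0 := by
        rcases lt_or_gt_of_ne (sub_ne_zero_of_ne hdy) with h2 | h2
        · exact h2
        · exact absurd (hsig.mp h2) (by linarith)
      have := combo_pos (dx := -(dmap a x - b)) (dy := -(dmap a y - b))
        (by linarith) (by linarith) hu hv huv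
      nlinarith
    · have h2 : 0 < dmap a y - b := hsig.mpr h1
      have := combo_pos h1 h2 hu hv huv
      nlinarith

/-- the complement region set. -/
def regn (E : Set (Fin n → ℝ)) (A : Finset (Set (Fin n → ℝ))) : Set (Fin n → ℝ) :=
  E \ ⋃ K ∈ A, K

lemma mem_regn {E : Set (Fin n → ℝ)} {A : Finset (Set (Fin n → ℝ))} {x} :
    x ∈ regn E A ↔ x ∈ E ∧ ∀ K ∈ A, x ∉ K := by
  simp [regn]

/-- the chamber of `x`, defined choice-freely by segments. -/
def cell (E : Set (Fin n → ℝ)) (A : Finset (Set (Fin n → ℝ))) (x : Fin n → ℝ) :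
    Set (Fin n → ℝ) :=
  {y | y ∈ E ∧ ∀ K ∈ A, segment ℝ x y ∩ K = ∅}

lemma mem_cell_self {E : Set (Fin n → ℝ)} {A : Finset (Set (Fin n → ℝ))} {x}
    (hx : x ∈ regn E A) : x ∈ cell E A x := by
  rw [mem_regn] at hx
  refine ⟨hx.1, fun K hK => ?_⟩
  rw [segment_same]
  simp [hx.2 K hK]

lemma cell_subset_regn {E : Set (Fin n → ℝ)} {A : Finset (Set (Fin n → ℝ))} {x} :
    cell E A x ⊆ regn E A := by
  rintro y ⟨hyE, hseg⟩
  rw [mem_regn]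
  refine ⟨hyE, fun K hK hyK => ?_⟩
  have : y ∈ segment ℝ x y ∩ K := ⟨right_mem_segment ℝ x y, hyK⟩
  rw [hseg K hK] at this; exact this

lemma cell_anti {E : Set (Fin n → ℝ)} {A A' : Finset (Set (Fin n → ℝ))} (h : A' ⊆ A) {x} :
    cell E A x ⊆ cell E A' x := fun y hy => ⟨hy.1, fun K hK => hy.2 K (h hK)⟩

lemma x_sign {E K : Set (Fin n → ℝ)} {A : Finset (Set (Fin n → ℝ))} {x}
    (hx : x ∈ regn E A) (hK : K ∈ A) {a b} (hrep : K = E ∩ {z | dmap a z = b}) :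
    dmap a x ≠ b := by
  rw [mem_regn] at hx
  intro hb
  exact hx.2 K hK (hrep ▸ ⟨hx.1, hb⟩)

/-- characterization of cell membership by signs, for all valid representations. -/
lemma mem_cell_iff {E : Set (Fin n → ℝ)} {W} (hE : IsFlat E W)
    {A : Finset (Set (Fin n → ℝ))} (hA : ∀ K ∈ A, RelHyp E K) {x}
    (hx : x ∈ regn E A) (y : Fin n → ℝ) :
    y ∈ cell E A x ↔ y ∈ E ∧ ∀ K ∈ A, ∀ a b, K = E ∩ {z | dmap a z = b} →
      (dmap a y ≠ b ∧ (0 < dmap a y - b ↔ 0 < dmap a x - b)) := by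
  constructor
  · rintro ⟨hyE, hseg⟩
    refine ⟨hyE, fun K hK a b hrep => ?_⟩
    have := (seg_iff hE.convex a b (mem_regn.mp hx).1 hyE (x_sign hx hK hrep)).mp
      (by rw [← hrep]; exact hseg K hK)
    exact this
  · rintro ⟨hyE, hsig⟩
    refine ⟨hyE, fun K hK => ?_⟩
    obtain ⟨a, b, hrep, -, -⟩ := hA K hK
    rw [hrep]
    exact (seg_iff hE.convex a b (mem_regn.mp hx).1 hyE (x_sign hx hK hrep)).mpr
      (hsig K hK a b hrep)

lemma cell_eq_of_mem {E : Set (Fin n → ℝ)} {W} (hE : IsFlat E W)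
    {A : Finset (Set (Fin n → ℝ))} (hA : ∀ K ∈ A, RelHyp E K) {x y}
    (hx : x ∈ regn E A) (hy : y ∈ cell E A x) : cell E A y = cell E A x := by
  have hyr : y ∈ regn E A := cell_subset_regn hy
  rw [mem_cell_iff hE hA hx y] at hy
  ext z
  rw [mem_cell_iff hE hA hx z, mem_cell_iff hE hA hyr z]
  constructor
  · rintro ⟨hzE, hsig⟩
    refine ⟨hzE, fun K hK a b hrep => ?_⟩
    obtain ⟨h1, h2⟩ := hsig K hK a b hrep
    obtain ⟨h3, h4⟩ := hy.2 K hK a b hrep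
    exact ⟨h1, h2.trans h4⟩
  · rintro ⟨hzE, hsig⟩
    refine ⟨hzE, fun K hK a b hrep => ?_⟩
    obtain ⟨h1, h2⟩ := hsig K hK a b hrep
    obtain ⟨h3, h4⟩ := hy.2 K hK a b hrep
    exact ⟨h1, h2.trans h4.symm⟩


lemma sign_prod_iff {dx dy : ℝ} (hdx : dx ≠ 0) :
    (dy ≠ 0 ∧ (0 < dy ↔ 0 < dx)) ↔ 0 < dy * dx := by
  rw [mul_pos_iff]
  rcases lt_or_gt_of_ne hdx with h | h
  · constructor
    · rintro ⟨h1, h2⟩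
      rcases lt_or_gt_of_ne h1 with h3 | h3
      · exact Or.inr ⟨h3, h⟩
      · exact absurd (h2.mp h3) (by linarith)
    · rintro (⟨h1, h2⟩ | ⟨h1, h2⟩)
      · linarith
      · exact ⟨by linarith, ⟨fun hh => by linarith, fun hh => by linarith⟩⟩
  · constructor
    · rintro ⟨h1, h2⟩
      exact Or.inl ⟨h2.mpr h, h⟩
    · rintro (⟨h1, h2⟩ | ⟨h1, h2⟩)
      · exact ⟨by linarith, ⟨fun _ => h, fun _ => h1⟩⟩
      · linarith

lemma convex_sideset (a : Fin n → ℝ) (b c : ℝ) :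
    Convex ℝ {y | 0 < (dmap a y - b) * c} := by
  intro y1 h1 y2 h2 u v hu hv huv
  have hc := dmap_combo a b y1 y2 (u := u) (v := v) huv
  have heq : (dmap a (u • y1 + v • y2) - b) * c =
      u * ((dmap a y1 - b) * c) + v * ((dmap a y2 - b) * c) := by rw [hc]; ring
  show 0 < (dmap a (u • y1 + v • y2) - b) * c
  rw [heq]
  exact combo_pos h1 h2 hu hv huv

lemma open_sideset (a : Fin n → ℝ) (b c : ℝ) :
    IsOpen {y : Fin n → ℝ | 0 < (dmap a y - b) * c} :=
  isOpen_lt continuous_const (((dmap_cont a).sub continuous_const).mul continuous_const)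

/-- The set of chambers. -/
def Cells (E : Set (Fin n → ℝ)) (A : Finset (Set (Fin n → ℝ))) : Set (Set (Fin n → ℝ)) :=
  {c | ∃ x ∈ regn E A, c = cell E A x}

section SignData

variable {E : Set (Fin n → ℝ)} {W : Submodule ℝ (Fin n → ℝ)}
  {A : Finset (Set (Fin n → ℝ))}

lemma cell_eq_inter (hE : IsFlat E W) (hA : ∀ K ∈ A, RelHyp E K)
    (av : ∀ K ∈ A, Fin n → ℝ) (bv : ∀ K ∈ A, ℝ)
    (hrep : ∀ K (hK : K ∈ A), K = E ∩ {z | dmap (av K hK) z = bv K hK})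
    {x} (hx : x ∈ regn E A) :
    cell E A x = E ∩ ⋂ K : {K // K ∈ A},
      {y | 0 < (dmap (av K.1 K.2) y - bv K.1 K.2) * (dmap (av K.1 K.2) x - bv K.1 K.2)} := by
  ext y
  rw [Set.mem_inter_iff, Set.mem_iInter]
  constructor
  · rintro ⟨hyE, hseg⟩
    refine ⟨hyE, fun K => ?_⟩
    have h1 := (seg_iff hE.convex (av K.1 K.2) (bv K.1 K.2) (mem_regn.mp hx).1 hyE
      (x_sign hx K.2 (hrep K.1 K.2))).mp (by rw [← hrep K.1 K.2]; exact hseg K.1 K.2)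
    have h2 : dmap (av K.1 K.2) y - bv K.1 K.2 ≠ 0 := sub_ne_zero_of_ne h1.1
    exact (sign_prod_iff (sub_ne_zero_of_ne (x_sign hx K.2 (hrep K.1 K.2)))).mp ⟨h2, h1.2⟩
  · rintro ⟨hyE, hsig⟩
    refine ⟨hyE, fun K hK => ?_⟩
    have h0 := (sign_prod_iff (sub_ne_zero_of_ne (x_sign hx hK (hrep K hK)))).mpr
      (hsig ⟨K, hK⟩)
    rw [hrep K hK]
    exact (seg_iff hE.convex (av K hK) (bv K hK) (mem_regn.mp hx).1 hyE
      (x_sign hx hK (hrep K hK))).mpr ⟨fun hh => h0.1 (by rw [hh]; ring), h0.2⟩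

end SignData

lemma cell_convex {E : Set (Fin n → ℝ)} {W} (hE : IsFlat E W)
    {A : Finset (Set (Fin n → ℝ))} (hA : ∀ K ∈ A, RelHyp E K) {x}
    (hx : x ∈ regn E A) : Convex ℝ (cell E A x) := by
  classical
  choose av bv hrep hKne hns using hA
  rw [cell_eq_inter hE (fun K hK => ⟨av K hK, bv K hK, hrep K hK, hKne K hK, hns K hK⟩)
    av bv hrep hx]
  exact hE.convex.inter (convex_iInter fun K => convex_sideset _ _ _)

lemma connectedComponentIn_regn {E : Set (Fin n → ℝ)} {W} (hE : IsFlat E W)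
    {A : Finset (Set (Fin n → ℝ))} (hA : ∀ K ∈ A, RelHyp E K) {x}
    (hx : x ∈ regn E A) : connectedComponentIn (regn E A) x = cell E A x := by
  classical
  choose av bv hrep hKne hns using hA
  have hA' : ∀ K ∈ A, RelHyp E K := fun K hK =>
    ⟨av K hK, bv K hK, hrep K hK, hKne K hK, hns K hK⟩
  set U : (Fin n → ℝ) → Set (Fin n → ℝ) := fun z => ⋂ K : {K // K ∈ A},
    {y | 0 < (dmap (av K.1 K.2) y - bv K.1 K.2) *
      (dmap (av K.1 K.2) z - bv K.1 K.2)} with hUdef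
  have hUopen : ∀ z, IsOpen (U z) := fun z =>
    isOpen_iInter_of_finite fun K => open_sideset _ _ _
  have hcell : ∀ z ∈ regn E A, cell E A z = E ∩ U z := fun z hz =>
    cell_eq_inter hE hA' av bv hrep hz
  refine subset_antisymm ?_
    ((cell_convex hE hA' hx).isPreconnected.subset_connectedComponentIn
      (mem_cell_self hx) cell_subset_regn)
  by_contra hsub
  obtain ⟨w, hwC, hwcell⟩ := Set.not_subset.mp hsub
  set C := connectedComponentIn (regn E A) x with hC
  have hCsub : C ⊆ regn E A := connectedComponentIn_subset _ _
  have hpre : IsPreconnected C := isPreconnected_connectedComponentIn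
  set v : Set (Fin n → ℝ) := ⋃ z ∈ regn E A \ cell E A x, U z with hv
  have hvopen : IsOpen v := isOpen_biUnion fun z _ => hUopen z
  have hw_regn : w ∈ regn E A := hCsub hwC
  have hsubuv : C ⊆ U x ∪ v := by
    intro c hc
    have hcr : c ∈ regn E A := hCsub hc
    by_cases hcx : c ∈ cell E A x
    · left
      exact ((hcell x hx) ▸ hcx).2
    · right
      refine Set.mem_biUnion ⟨hcr, hcx⟩ ?_
      exact ((hcell c hcr) ▸ (mem_cell_self hcr)).2
  have hne1 : (C ∩ U x).Nonempty := by
    refine ⟨x, mem_connectedComponentIn hx, ?_⟩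
    exact ((hcell x hx) ▸ (mem_cell_self hx)).2
  have hne2 : (C ∩ v).Nonempty := by
    refine ⟨w, hwC, Set.mem_biUnion ⟨hw_regn, hwcell⟩ ?_⟩
    exact ((hcell w hw_regn) ▸ (mem_cell_self hw_regn)).2
  obtain ⟨z, hzC, hzu, hzv⟩ := hpre (U x) v (hUopen x) hvopen hsubuv hne1 hne2
  have hzr : z ∈ regn E A := hCsub hzC
  have hzx : z ∈ cell E A x := by rw [hcell x hx]; exact ⟨(mem_regn.mp hzr).1, hzu⟩
  obtain ⟨w', hw'mem, hzw'⟩ := Set.mem_iUnion₂.mp hzv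
  have hzw : z ∈ cell E A w' := by
    rw [hcell w' hw'mem.1]; exact ⟨(mem_regn.mp hzr).1, hzw'⟩
  have e1 : cell E A z = cell E A x := cell_eq_of_mem hE hA' hx hzx
  have e2 : cell E A z = cell E A w' := cell_eq_of_mem hE hA' hw'mem.1 hzw
  have : w' ∈ cell E A x := by rw [← e1, e2]; exact mem_cell_self hw'mem.1
  exact hw'mem.2 this

lemma cells_finite {E : Set (Fin n → ℝ)} {W} (hE : IsFlat E W)
    {A : Finset (Set (Fin n → ℝ))} (hA : ∀ K ∈ A, RelHyp E K) :
    (Cells E A).Finite := by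
  classical
  choose av bv hrep hKne hns using hA
  have hA' : ∀ K ∈ A, RelHyp E K := fun K hK =>
    ⟨av K hK, bv K hK, hrep K hK, hKne K hK, hns K hK⟩
  set m : Set (Fin n → ℝ) → Finset {K // K ∈ A} := fun c =>
    Finset.univ.filter (fun K => ∃ p ∈ c, 0 < dmap (av K.1 K.2) p - bv K.1 K.2) with hm
  have hsign : ∀ (x) (_ : x ∈ regn E A) (K : {K // K ∈ A}),
      ((∃ p ∈ cell E A x, 0 < dmap (av K.1 K.2) p - bv K.1 K.2) ↔
        0 < dmap (av K.1 K.2) x - bv K.1 K.2) := by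
    intro x hx K
    constructor
    · rintro ⟨p, hp, hpos⟩
      rw [cell_eq_inter hE hA' av bv hrep hx] at hp
      have := Set.mem_iInter.mp hp.2 K
      simp only [Set.mem_setOf_eq] at this
      rcases mul_pos_iff.mp this with ⟨h1, h2⟩ | ⟨h1, h2⟩
      · exact h2
      · linarith
    · intro hpos
      exact ⟨x, mem_cell_self hx, hpos⟩
  apply Set.Finite.of_finite_image (f := m) (Set.toFinite _)
  rintro c₁ ⟨x₁, hx₁, rfl⟩ c₂ ⟨x₂, hx₂, rfl⟩ hmeq
  have hsig : ∀ K : {K // K ∈ A},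
      (0 < dmap (av K.1 K.2) x₂ - bv K.1 K.2 ↔ 0 < dmap (av K.1 K.2) x₁ - bv K.1 K.2) := by
    intro K
    have h1 := hsign x₁ hx₁ K
    have h2 := hsign x₂ hx₂ K
    constructor
    · intro h
      have : K ∈ m (cell E A x₂) := Finset.mem_filter.mpr ⟨Finset.mem_univ _, h2.mpr h⟩
      rw [← hmeq] at this
      exact h1.mp (Finset.mem_filter.mp this).2
    · intro h
      have : K ∈ m (cell E A x₁) := Finset.mem_filter.mpr ⟨Finset.mem_univ _, h1.mpr h⟩
      rw [hmeq] at this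
      exact h2.mp (Finset.mem_filter.mp this).2
  have hx2c : x₂ ∈ cell E A x₁ := by
    rw [cell_eq_inter hE hA' av bv hrep hx₁]
    refine ⟨(mem_regn.mp hx₂).1, Set.mem_iInter.mpr fun K => ?_⟩
    refine (sign_prod_iff (sub_ne_zero_of_ne (x_sign hx₁ K.2 (hrep K.1 K.2)))).mp
      ⟨sub_ne_zero_of_ne (x_sign hx₂ K.2 (hrep K.1 K.2)), hsig K⟩
  exact (cell_eq_of_mem hE hA' hx₁ hx2c).symm


lemma IsFlat.line_mem {E : Set (Fin n → ℝ)} {W} (hE : IsFlat E W) {p e : Fin n → ℝ}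
    (hp : p ∈ E) (he : e ∈ E) (t : ℝ) : p + t • (e - p) ∈ E := by
  rw [hE.rebase hp] at he ⊢
  have : (p + t • (e - p)) - p = t • (e - p) := by abel
  rw [Set.mem_setOf_eq, this]
  exact W.smul_mem t he

/-- Near a point of a flat on a hyperplane not containing the flat, there are points
of both strict sides, inside any open neighbourhood. -/
lemma both_signs {E U : Set (Fin n → ℝ)} {W} (hE : IsFlat E W) (hU : IsOpen U)
    {p : Fin n → ℝ} {a : Fin n → ℝ} {b : ℝ} (hpE : p ∈ E) (hpU : p ∈ U)
    (hpb : dmap a p = b) (hns : ¬ E ⊆ {z | dmap a z = b}) :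
    (∃ q ∈ E ∩ U, 0 < dmap a q - b) ∧ (∃ q ∈ E ∩ U, dmap a q - b < 0) := by
  obtain ⟨e, heE, heb⟩ := Set.not_subset.mp hns
  have heb' : dmap a e - b ≠ 0 := sub_ne_zero_of_ne heb
  obtain ⟨ε, hε, hball⟩ := Metric.isOpen_iff.mp hU p hpU
  set c := ‖e - p‖ with hc
  have hc0 : 0 ≤ c := norm_nonneg _
  set t₀ : ℝ := ε / (2 * (c + 1)) with ht₀
  have ht₀pos : 0 < t₀ := by positivity
  have hmem : ∀ t : ℝ, |t| ≤ t₀ → p + t • (e - p) ∈ E ∩ U := by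
    intro t ht
    refine ⟨hE.line_mem hpE heE t, hball ?_⟩
    rw [Metric.mem_ball, dist_eq_norm]
    have : p + t • (e - p) - p = t • (e - p) := by abel
    rw [this, norm_smul, Real.norm_eq_abs]
    calc |t| * c ≤ t₀ * c := by nlinarith
      _ < ε := by
        rw [ht₀]
        rw [div_mul_eq_mul_div, div_lt_iff₀ (by positivity)]
        nlinarith
  have hval : ∀ t : ℝ, dmap a (p + t • (e - p)) - b = t * (dmap a e - b) := by
    intro t
    simp only [map_add, map_smul, map_sub, smul_eq_mul]
    rw [hpb]; ring
  rcases lt_or_gt_of_ne heb' with h | h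
  · constructor
    · refine ⟨p + (-t₀) • (e - p), hmem (-t₀) (by rw [abs_neg, abs_of_pos ht₀pos]), ?_⟩
      rw [hval]; nlinarith
    · refine ⟨p + t₀ • (e - p), hmem t₀ (by rw [abs_of_pos ht₀pos]), ?_⟩
      rw [hval]; nlinarith
  · constructor
    · refine ⟨p + t₀ • (e - p), hmem t₀ (by rw [abs_of_pos ht₀pos]), ?_⟩
      rw [hval]; nlinarith
    · refine ⟨p + (-t₀) • (e - p), hmem (-t₀) (by rw [abs_neg, abs_of_pos ht₀pos]), ?_⟩
      rw [hval]; nlinarith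

open scoped Classical in
/-- The restriction of the arrangement `A` to the hyperplane `K`. -/
noncomputable def resHyp (A : Finset (Set (Fin n → ℝ))) (K : Set (Fin n → ℝ)) :
    Finset (Set (Fin n → ℝ)) :=
  ((A.erase K).image (· ∩ K)).filter (fun J => J.Nonempty)

lemma resHyp_relHyp {E : Set (Fin n → ℝ)} {W} (hE : IsFlat E W)
    {A : Finset (Set (Fin n → ℝ))} (hA : ∀ K' ∈ A, RelHyp E K') {K} (hK : K ∈ A) :
    ∀ J ∈ resHyp A K, RelHyp K J := by
  intro J hJ
  classical
  rw [resHyp, Finset.mem_filter, Finset.mem_image] at hJ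
  obtain ⟨⟨K', hK', rfl⟩, hne⟩ := hJ
  rw [Finset.mem_erase] at hK'
  exact RelHyp.trace hE (hA K hK) (hA K' hK'.2) (fun h => hK'.1 h.symm) hne

lemma cell_split {E : Set (Fin n → ℝ)} {A : Finset (Set (Fin n → ℝ))} {K} (hK : K ∈ A) (x) :
    cell E A x = cell E (A.erase K) x ∩ {y | segment ℝ x y ∩ K = ∅} := by
  ext y
  simp only [cell, Set.mem_setOf_eq, Set.mem_inter_iff]
  constructor
  · rintro ⟨hyE, hseg⟩
    exact ⟨⟨hyE, fun K' hK' => hseg K' (Finset.mem_of_mem_erase hK')⟩, hseg K hK⟩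
  · rintro ⟨⟨hyE, hseg⟩, hsegK⟩
    refine ⟨hyE, fun K' hK' => ?_⟩
    by_cases h : K' = K
    · rw [h]; exact hsegK
    · exact hseg K' (Finset.mem_erase.mpr ⟨h, hK'⟩)

lemma regn_erase {E : Set (Fin n → ℝ)} {A : Finset (Set (Fin n → ℝ))} {K} (hK : K ∈ A) :
    regn E A = regn E (A.erase K) \ K := by
  ext x
  simp only [mem_regn, Set.mem_diff]
  constructor
  · rintro ⟨hxE, h⟩
    exact ⟨⟨hxE, fun K' hK' => h K' (Finset.mem_of_mem_erase hK')⟩, h K hK⟩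
  · rintro ⟨⟨hxE, h⟩, hxK⟩
    refine ⟨hxE, fun K' hK' => ?_⟩
    by_cases hh : K' = K
    · rw [hh]; exact hxK
    · exact h K' (Finset.mem_erase.mpr ⟨hh, hK'⟩)

lemma trace_cell {E : Set (Fin n → ℝ)} {W} (hE : IsFlat E W)
    {A : Finset (Set (Fin n → ℝ))} (hA : ∀ K' ∈ A, RelHyp E K') {K} (hK : K ∈ A)
    {x'} (hx' : x' ∈ regn E (A.erase K)) {p} (hp : p ∈ cell E (A.erase K) x' ∩ K) :
    p ∈ regn K (resHyp A K) ∧ cell E (A.erase K) x' ∩ K = cell K (resHyp A K) p := by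
  classical
  set A' := A.erase K with hA'def
  have hA' : ∀ K' ∈ A', RelHyp E K' := fun K' h => hA K' (Finset.mem_of_mem_erase h)
  have hKE : K ⊆ E := (hA K hK).subset
  obtain ⟨WK, hWKflat, -⟩ := (hA K hK).flat hE
  have hpc' : p ∈ cell E A' x' := hp.1
  have hpK : p ∈ K := hp.2
  have hpD' : p ∈ regn E A' := cell_subset_regn hpc'
  have hcellp : cell E A' p = cell E A' x' := cell_eq_of_mem hE hA' hx' hpc'
  have hpres : p ∈ regn K (resHyp A K) := by
    rw [mem_regn]
    refine ⟨hpK, fun J hJ => ?_⟩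
    rw [resHyp, Finset.mem_filter, Finset.mem_image] at hJ
    obtain ⟨⟨K', hK', rfl⟩, -⟩ := hJ
    intro hpJ
    exact (mem_regn.mp hpD').2 K' hK' hpJ.1
  refine ⟨hpres, ?_⟩
  ext y
  constructor
  · rintro ⟨hyc', hyK⟩
    have hyp' : y ∈ cell E A' p := by rw [hcellp]; exact hyc'
    refine ⟨hyK, fun J hJ => ?_⟩
    rw [resHyp, Finset.mem_filter, Finset.mem_image] at hJ
    obtain ⟨⟨K', hK', rfl⟩, -⟩ := hJ
    have hseg : segment ℝ p y ∩ K' = ∅ := hyp'.2 K' hK'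
    rw [Set.eq_empty_iff_forall_notMem]
    rintro z ⟨hz1, hz2⟩
    rw [Set.eq_empty_iff_forall_notMem] at hseg
    exact hseg z ⟨hz1, hz2.1⟩
  · intro hy
    have hyK : y ∈ K := hy.1
    have hsegK : segment ℝ p y ⊆ K := hWKflat.convex.segment_subset hpK hyK
    have hyc'p : y ∈ cell E A' p := by
      refine ⟨hKE hyK, fun K' hK' => ?_⟩
      by_cases hne : (K' ∩ K).Nonempty
      · have hJ : K' ∩ K ∈ resHyp A K := by
          rw [resHyp, Finset.mem_filter, Finset.mem_image]
          exact ⟨⟨K', hK', rfl⟩, hne⟩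
        have h0 : segment ℝ p y ∩ (K' ∩ K) = ∅ := hy.2 _ hJ
        rw [Set.eq_empty_iff_forall_notMem] at h0 ⊢
        rintro z ⟨hz1, hz2⟩
        exact h0 z ⟨hz1, hz2, hsegK hz1⟩
      · rw [Set.not_nonempty_iff_eq_empty] at hne
        rw [Set.eq_empty_iff_forall_notMem] at hne ⊢
        rintro z ⟨hz1, hz2⟩
        exact hne z ⟨hz2, hsegK hz1⟩
    rw [hcellp] at hyc'p
    exact ⟨hyc'p, hyK⟩

lemma cells_rec {E : Set (Fin n → ℝ)} {W} (hE : IsFlat E W)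
    {A : Finset (Set (Fin n → ℝ))} (hA : ∀ K' ∈ A, RelHyp E K') {K} (hK : K ∈ A) :
    (Cells E A).ncard = (Cells E (A.erase K)).ncard + (Cells K (resHyp A K)).ncard := by
  classical
  set A' := A.erase K with hA'def
  have hA' : ∀ K' ∈ A', RelHyp E K' := fun K' h => hA K' (Finset.mem_of_mem_erase h)
  obtain ⟨aK, bK, hKrep, hKne, hKns⟩ := hA K hK
  have hKE : K ⊆ E := by rw [hKrep]; exact Set.inter_subset_left
  have hKval : ∀ z ∈ K, dmap aK z = bK := fun z hz => by
    rw [hKrep] at hz; exact hz.2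
  have hKoff : ∀ z ∈ E, z ∉ K → dmap aK z ≠ bK := fun z hzE hzK hc =>
    hzK (by rw [hKrep]; exact ⟨hzE, hc⟩)
  have hDD' : regn E A ⊆ regn E A' := by
    rw [regn_erase hK]; exact Set.diff_subset
  have hDmem : ∀ x, x ∈ regn E A' → x ∉ K → x ∈ regn E A := by
    intro x h1 h2; rw [regn_erase hK]; exact ⟨h1, h2⟩
  set F : Set (Fin n → ℝ) → Set (Fin n → ℝ) :=
    fun c => if h : Set.Nonempty c then cell E A' h.choose else ∅ with hFdef
  have hF : ∀ x ∈ regn E A, F (cell E A x) = cell E A' x := by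
    intro x hx
    have hne : (cell E A x).Nonempty := ⟨x, mem_cell_self hx⟩
    rw [hFdef]
    simp only [dif_pos hne]
    have hp : hne.choose ∈ cell E A x := hne.choose_spec
    have hp' : hne.choose ∈ cell E A' x := cell_anti (Finset.erase_subset _ _) hp
    exact cell_eq_of_mem hE hA' (hDD' hx) hp'
  have hfib : ∀ x' ∈ regn E A', {c | c ∈ Cells E A ∧ F c = cell E A' x'} =
      (cell E A) '' ((cell E A' x') \ K) := by
    intro x' hx'
    ext c
    constructor
    · rintro ⟨⟨x, hx, rfl⟩, hFc⟩
      rw [hF x hx] at hFc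
      refine ⟨x, ⟨?_, (mem_regn.mp hx).2 K hK⟩, rfl⟩
      rw [← hFc]
      exact mem_cell_self (hDD' hx)
    · rintro ⟨x, ⟨hxc', hxK⟩, rfl⟩
      have hxD' : x ∈ regn E A' := cell_subset_regn hxc'
      have hxD : x ∈ regn E A := hDmem x hxD' hxK
      refine ⟨⟨x, hxD, rfl⟩, ?_⟩
      rw [hF x hxD]
      exact cell_eq_of_mem hE hA' hx' hxc'
  have hsame : ∀ x' (_ : x' ∈ regn E A') x y, x ∈ (cell E A' x') \ K →
      y ∈ (cell E A' x') \ K → ((0 < dmap aK x - bK) ↔ (0 < dmap aK y - bK)) →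
      cell E A x = cell E A y := by
    intro x' hx' x y hx hy hsig
    have hxD' : x ∈ regn E A' := cell_subset_regn hx.1
    have hyD' : y ∈ regn E A' := cell_subset_regn hy.1
    have hxD : x ∈ regn E A := hDmem x hxD' hx.2
    have hyD : y ∈ regn E A := hDmem y hyD' hy.2
    have hyx : y ∈ cell E A x := by
      rw [cell_split hK]
      constructor
      · rw [cell_eq_of_mem hE hA' hx' hx.1]
        exact hy.1
      · show segment ℝ x y ∩ K = ∅
        rw [hKrep]
        exact (seg_iff hE.convex aK bK (mem_regn.mp hxD').1 (mem_regn.mp hyD').1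
          (hKoff x (mem_regn.mp hxD').1 hx.2)).mpr
          ⟨hKoff y (mem_regn.mp hyD').1 hy.2, hsig.symm⟩
    exact (cell_eq_of_mem hE hA hxD hyx).symm
  have hfibcard : ∀ x' ∈ regn E A', ((cell E A) '' ((cell E A' x') \ K)).ncard =
      if ((cell E A' x') ∩ K).Nonempty then 2 else 1 := by
    intro x' hx'
    by_cases hcc : ((cell E A' x') ∩ K).Nonempty
    · rw [if_pos hcc]
      obtain ⟨p, hpc', hpK⟩ := hcc
      choose av bv hrep hKne2 hns2 using hA'
      have hA'' : ∀ K' ∈ A', RelHyp E K' := fun K' h =>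
        ⟨av K' h, bv K' h, hrep K' h, hKne2 K' h, hns2 K' h⟩
      have hc'eq := cell_eq_inter hE hA'' av bv hrep hx'
      set U' : Set (Fin n → ℝ) := ⋂ K' : {K' // K' ∈ A'},
        {y | 0 < (dmap (av K'.1 K'.2) y - bv K'.1 K'.2) *
          (dmap (av K'.1 K'.2) x' - bv K'.1 K'.2)} with hU'def
      have hU'open : IsOpen U' := isOpen_iInter_of_finite fun K' => open_sideset _ _ _
      have hpE : p ∈ E := hKE hpK
      have hpb : dmap aK p = bK := hKval p hpK
      have hpU' : p ∈ U' := by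
        have := hc'eq ▸ hpc'
        exact this.2
      obtain ⟨⟨q1, hq1, hq1pos⟩, ⟨q2, hq2, hq2neg⟩⟩ :=
        both_signs hE hU'open hpE hpU' hpb hKns
      have hq1c' : q1 ∈ cell E A' x' := by rw [hc'eq]; exact hq1
      have hq2c' : q2 ∈ cell E A' x' := by rw [hc'eq]; exact hq2
      have hq1K : q1 ∉ K := fun h => by
        have := hKval q1 h; rw [this] at hq1pos; simp at hq1pos
      have hq2K : q2 ∉ K := fun h => by
        have := hKval q2 h; rw [this] at hq2neg; simp at hq2neg
      have hq1m : q1 ∈ (cell E A' x') \ K := ⟨hq1c', hq1K⟩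
      have hq2m : q2 ∈ (cell E A' x') \ K := ⟨hq2c', hq2K⟩
      have himg : (cell E A) '' ((cell E A' x') \ K) = {cell E A q1, cell E A q2} := by
        ext c
        constructor
        · rintro ⟨x, hx, rfl⟩
          have hxD' : x ∈ regn E A' := cell_subset_regn hx.1
          have hxE : x ∈ E := (mem_regn.mp hxD').1
          rcases lt_or_gt_of_ne (sub_ne_zero_of_ne (hKoff x hxE hx.2)) with hs | hs
          · right
            exact hsame x' hx' x q2 hx hq2m ⟨fun h => absurd h (by linarith),
              fun h => absurd h (by linarith)⟩
          · left
            exact hsame x' hx' x q1 hx hq1m ⟨fun _ => hq1pos, fun _ => hs⟩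
        · rintro (rfl | rfl)
          exacts [⟨q1, hq1m, rfl⟩, ⟨q2, hq2m, rfl⟩]
      rw [himg]
      refine Set.ncard_pair ?_
      intro hcontra
      have hq1D : q1 ∈ regn E A := hDmem q1 (cell_subset_regn hq1c') hq1K
      have hq2D : q2 ∈ regn E A := hDmem q2 (cell_subset_regn hq2c') hq2K
      have : q2 ∈ cell E A q1 := by rw [hcontra]; exact mem_cell_self hq2D
      rw [cell_split hK] at this
      have hseg : segment ℝ q1 q2 ∩ K = ∅ := this.2
      rw [hKrep] at hseg
      have := (seg_iff hE.convex aK bK (mem_regn.mp hq1D).1 (mem_regn.mp hq2D).1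
        (hKoff q1 (mem_regn.mp hq1D).1 hq1K)).mp hseg
      have := this.2.mpr hq1pos
      linarith
    · rw [if_neg hcc]
      have hx'K : x' ∉ K := fun h => hcc ⟨x', mem_cell_self hx', h⟩
      have hx'm : x' ∈ (cell E A' x') \ K := ⟨mem_cell_self hx', hx'K⟩
      have himg : (cell E A) '' ((cell E A' x') \ K) = {cell E A x'} := by
        ext c
        constructor
        · rintro ⟨x, hx, rfl⟩
          have hxD' : x ∈ regn E A' := cell_subset_regn hx.1
          have hxD : x ∈ regn E A := hDmem x hxD' hx.2
          have hx'D : x' ∈ regn E A := hDmem x' hx' hx'K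
          have hxcell : x ∈ cell E A x' := by
            rw [cell_split hK]
            refine ⟨hx.1, ?_⟩
            show segment ℝ x' x ∩ K = ∅
            rw [Set.eq_empty_iff_forall_notMem]
            rintro z ⟨hz1, hz2⟩
            have : z ∈ cell E A' x' :=
              (cell_convex hE hA' hx').segment_subset (mem_cell_self hx') hx.1 hz1
            exact hcc ⟨z, this, hz2⟩
          exact Set.mem_singleton_iff.mpr (cell_eq_of_mem hE hA hx'D hxcell)
        · rintro rfl
          exact ⟨x', hx'm, rfl⟩
      rw [himg, Set.ncard_singleton]
  -- now assemble the count
  have hfin := cells_finite hE hA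
  have hfin' := cells_finite hE hA'
  have hfinK := cells_finite ((hA K hK).flat hE).choose_spec.1 (resHyp_relHyp hE hA hK)
  set SA := hfin.toFinset with hSA
  set SA' := hfin'.toFinset with hSA'
  have hmapsto : ∀ c ∈ SA, F c ∈ SA' := by
    intro c hc
    rw [hSA, Set.Finite.mem_toFinset] at hc
    obtain ⟨x, hx, rfl⟩ := hc
    rw [hSA', Set.Finite.mem_toFinset, hF x hx]
    exact ⟨x, hDD' hx, rfl⟩
  have hcount := Finset.card_eq_sum_card_fiberwise hmapsto
  have hterm : ∀ c' ∈ SA', (SA.filter (fun c => F c = c')).card =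
      if (c' ∩ K).Nonempty then 2 else 1 := by
    intro c' hc'
    rw [hSA', Set.Finite.mem_toFinset] at hc'
    obtain ⟨x', hx', rfl⟩ := hc'
    have : ((SA.filter (fun c => F c = cell E A' x')) : Set (Set (Fin n → ℝ))) =
        {c | c ∈ Cells E A ∧ F c = cell E A' x'} := by
      ext c
      simp only [Finset.coe_filter, Set.mem_setOf_eq, hSA, Set.Finite.mem_toFinset]
    calc (SA.filter (fun c => F c = cell E A' x')).card
        = ((SA.filter (fun c => F c = cell E A' x')) : Set (Set (Fin n → ℝ))).ncard := by
          rw [Set.ncard_coe_finset]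
      _ = ({c | c ∈ Cells E A ∧ F c = cell E A' x'} : Set (Set (Fin n → ℝ))).ncard := by
          rw [this]
      _ = ((cell E A) '' ((cell E A' x') \ K)).ncard := by rw [hfib x' hx']
      _ = _ := hfibcard x' hx'
  have hsum : SA.card = SA'.card + (SA'.filter (fun c' => (c' ∩ K).Nonempty)).card := by
    rw [hcount]
    rw [Finset.sum_congr rfl hterm]
    have : ∀ c' ∈ SA', (if (c' ∩ K).Nonempty then 2 else 1) =
        1 + (if (c' ∩ K).Nonempty then 1 else 0) := by
      intro c' _; split <;> rfl
    rw [Finset.sum_congr rfl this, Finset.sum_add_distrib, Finset.sum_const, smul_eq_mul,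
      mul_one, Finset.sum_boole]
    simp
  -- the bijection with the restricted arrangement
  have hbij : (SA'.filter (fun c' => (c' ∩ K).Nonempty)).card = (Cells K (resHyp A K)).ncard := by
    have hTset : ((SA'.filter (fun c' => (c' ∩ K).Nonempty)) : Set (Set (Fin n → ℝ))) =
        {c' | c' ∈ Cells E A' ∧ (c' ∩ K).Nonempty} := by
      ext c'
      simp only [Finset.coe_filter, Set.mem_setOf_eq, hSA', Set.Finite.mem_toFinset]
    set T : Set (Set (Fin n → ℝ)) := {c' | c' ∈ Cells E A' ∧ (c' ∩ K).Nonempty} with hT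
    have hinj : Set.InjOn (· ∩ K) T := by
      rintro c1 ⟨⟨x1, hx1, rfl⟩, hne1⟩ c2 ⟨⟨x2, hx2, rfl⟩, hne2⟩ heq
      obtain ⟨p, hp1, hpK⟩ := hne1
      have hp2 : p ∈ cell E A' x2 := by
        have heq' : cell E A' x1 ∩ K = cell E A' x2 ∩ K := heq
        have : p ∈ cell E A' x2 ∩ K := heq' ▸ (⟨hp1, hpK⟩ : p ∈ cell E A' x1 ∩ K)
        exact this.1
      rw [← cell_eq_of_mem hE hA' hx1 hp1, ← cell_eq_of_mem hE hA' hx2 hp2]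
    have himg : (· ∩ K) '' T = Cells K (resHyp A K) := by
      ext c''
      constructor
      · rintro ⟨c', ⟨⟨x1, hx1, rfl⟩, hne1⟩, rfl⟩
        obtain ⟨p, hp⟩ := hne1
        obtain ⟨hpres, heq⟩ := trace_cell hE hA hK hx1 hp
        exact ⟨p, hpres, heq⟩
      · rintro ⟨q, hq, rfl⟩
        have hqK : q ∈ K := (mem_regn.mp hq).1
        have hqD' : q ∈ regn E A' := by
          rw [mem_regn]
          refine ⟨hKE hqK, fun K' hK' => ?_⟩
          by_cases hne : (K' ∩ K).Nonempty
          · have hJ : K' ∩ K ∈ resHyp A K := by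
              rw [resHyp, Finset.mem_filter, Finset.mem_image]
              exact ⟨⟨K', hK', rfl⟩, hne⟩
            intro hqK'
            exact (mem_regn.mp hq).2 _ hJ ⟨hqK', hqK⟩
          · intro hqK'
            exact hne ⟨q, hqK', hqK⟩
        have hqc : q ∈ cell E A' q := mem_cell_self hqD'
        obtain ⟨-, heq⟩ := trace_cell hE hA hK hqD' (⟨hqc, hqK⟩ : q ∈ cell E A' q ∩ K)
        exact ⟨cell E A' q, ⟨⟨q, hqD', rfl⟩, ⟨q, hqc, hqK⟩⟩, heq⟩
    calc (SA'.filter (fun c' => (c' ∩ K).Nonempty)).card = T.ncard := by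
          rw [← Set.ncard_coe_finset, hTset]
      _ = ((· ∩ K) '' T).ncard := (Set.ncard_image_of_injOn hinj).symm
      _ = (Cells K (resHyp A K)).ncard := by rw [himg]
  rw [Set.ncard_eq_toFinset_card _ hfin, Set.ncard_eq_toFinset_card _ hfin']
  rw [← hbij]
  exact hsum

lemma pairing_sum {γ' : Type} [DecidableEq γ'] (S : Finset γ') {e : γ'} (he : e ∈ S)
    (h : Finset γ' → ℤ) :
    ∑ C ∈ S.powerset, (-1:ℤ)^C.card * h (insert e C) = 0 := by
  classical
  have hS : S = insert e (S.erase e) := (Finset.insert_erase he).symm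
  rw [hS, Finset.sum_powerset_insert (Finset.notMem_erase e S)]
  have : ∀ C ∈ (S.erase e).powerset,
      (-1:ℤ)^(insert e C).card * h (insert e (insert e C)) = -((-1:ℤ)^C.card * h (insert e C)) := by
    intro C hC
    rw [Finset.mem_powerset] at hC
    have heC : e ∉ C := fun hh => (Finset.notMem_erase e S) (hC hh)
    rw [Finset.card_insert_of_notMem heC, Finset.insert_idem, pow_succ]
    ring
  rw [Finset.sum_congr rfl this, Finset.sum_neg_distrib]
  ring

lemma sum_powerset_image_sign {γ γ' : Type} [DecidableEq γ] [DecidableEq γ'] (D : Finset γ)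
    (t : γ → γ') (h : Finset γ' → ℤ) :
    ∑ B ∈ D.powerset, (-1:ℤ)^B.card * h (B.image t) =
    ∑ C ∈ (D.image t).powerset, (-1:ℤ)^C.card * h C := by
  classical
  induction D using Finset.induction generalizing h with
  | empty => simp
  | @insert a D ha ih =>
    rw [Finset.sum_powerset_insert ha, Finset.image_insert]
    have hsnd : ∀ B ∈ D.powerset,
        (-1:ℤ)^(insert a B).card * h ((insert a B).image t) =
        -((-1:ℤ)^B.card * (fun C => h (insert (t a) C)) (B.image t)) := by
      intro B hB
      rw [Finset.mem_powerset] at hB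
      have haB : a ∉ B := fun hh => ha (hB hh)
      rw [Finset.card_insert_of_notMem haB, Finset.image_insert, pow_succ]
      ring
    rw [Finset.sum_congr rfl hsnd, Finset.sum_neg_distrib, ih h,
      ih (fun C => h (insert (t a) C))]
    by_cases hta : t a ∈ D.image t
    · rw [Finset.insert_eq_self.mpr hta]
      rw [pairing_sum (D.image t) hta h]
      ring
    · rw [Finset.sum_powerset_insert hta]
      have : ∀ C ∈ (D.image t).powerset,
          (-1:ℤ)^(insert (t a) C).card * h (insert (t a) C) =
          -((-1:ℤ)^C.card * h (insert (t a) C)) := by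
        intro C hC
        rw [Finset.mem_powerset] at hC
        have : t a ∉ C := fun hh => hta (hC hh)
        rw [Finset.card_insert_of_notMem this, pow_succ]
        ring
      rw [Finset.sum_congr rfl this, Finset.sum_neg_distrib]

/-- the signed Whitney sum of the arrangement. -/
noncomputable def Wsum (E : Set (Fin n → ℝ)) (A : Finset (Set (Fin n → ℝ))) : ℤ :=
  ∑ B ∈ A.powerset, if (E ∩ ⋂ K ∈ B, K).Nonempty then
    (-1:ℤ)^(B.card + edim E + edim (E ∩ ⋂ K ∈ B, K)) else 0

lemma neg_one_pow_even (e : ℕ) : (-1:ℤ)^(e+e) = 1 := by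
  rw [← two_mul, pow_mul]; norm_num

lemma wsum_empty {E : Set (Fin n → ℝ)} (hEne : E.Nonempty) : Wsum E ∅ = 1 := by
  rw [Wsum, Finset.powerset_empty, Finset.sum_singleton]
  have h1 : (⋂ K ∈ (∅ : Finset (Set (Fin n → ℝ))), K) = Set.univ := by simp
  rw [h1, Set.inter_univ, if_pos hEne, Finset.card_empty, Nat.zero_add, neg_one_pow_even]

lemma biInter_image_inter (B : Finset (Set (Fin n → ℝ))) (K : Set (Fin n → ℝ)) :
    (⋂ J ∈ B.image (· ∩ K), J) = ⋂ K' ∈ B, (K' ∩ K) := by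
  ext z
  simp only [Set.mem_iInter, Finset.mem_image]
  constructor
  · intro h K' hK'
    exact h (K' ∩ K) ⟨K', hK', rfl⟩
  · rintro h J ⟨K', hK', rfl⟩
    exact h K' hK'

lemma wsum_rec {E : Set (Fin n → ℝ)} {W} (hE : IsFlat E W)
    {A : Finset (Set (Fin n → ℝ))} (hA : ∀ K' ∈ A, RelHyp E K') {K} (hK : K ∈ A) :
    Wsum E A = Wsum E (A.erase K) + Wsum K (resHyp A K) := by
  classical
  set A' := A.erase K with hA'def
  have hKE : K ⊆ E := (hA K hK).subset
  have hedim : edim K + 1 = edim E := (hA K hK).edim_succ hE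
  have hXeq : ∀ B : Finset (Set (Fin n → ℝ)),
      E ∩ ⋂ K' ∈ insert K B, K' = K ∩ ⋂ J ∈ B.image (· ∩ K), J := by
    intro B
    rw [Finset.set_biInter_insert, biInter_image_inter]
    ext z
    simp only [Set.mem_inter_iff, Set.mem_iInter]
    constructor
    · rintro ⟨hzE, hzK, hz⟩
      exact ⟨hzK, fun K' hK' => ⟨hz K' hK', hzK⟩⟩
    · rintro ⟨hzK, hz⟩
      exact ⟨hKE hzK, hzK, fun K' hK' => (hz K' hK').1⟩
  set h : Finset (Set (Fin n → ℝ)) → ℤ := fun C =>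
    if (K ∩ ⋂ J ∈ C, J).Nonempty then (-1:ℤ)^(edim K + edim (K ∩ ⋂ J ∈ C, J)) else 0
    with hhdef
  have step1 : Wsum E A = Wsum E A' +
      ∑ B ∈ A'.powerset, (-1:ℤ)^B.card * h (B.image (· ∩ K)) := by
    rw [Wsum, ← Finset.insert_erase hK, Finset.sum_powerset_insert (Finset.notMem_erase K A),
      ← hA'def]
    congr 1
    refine Finset.sum_congr rfl ?_
    intro B hB
    rw [Finset.mem_powerset] at hB
    have hKB : K ∉ B := fun hh => (Finset.notMem_erase K A) (hB hh)
    rw [hXeq B, hhdef]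
    by_cases hne : (K ∩ ⋂ J ∈ B.image (· ∩ K), J).Nonempty
    · rw [if_pos hne]
      simp only [if_pos hne]
      rw [Finset.card_insert_of_notMem hKB]
      have : B.card + 1 + edim E + edim (K ∩ ⋂ J ∈ B.image (· ∩ K), J) =
          (B.card + edim K + edim (K ∩ ⋂ J ∈ B.image (· ∩ K), J)) + 2 := by omega
      rw [this, pow_add, pow_add]
      ring
    · rw [if_neg hne]
      simp only [if_neg hne, mul_zero]
  rw [step1]
  congr 1
  rw [sum_powerset_image_sign]
  -- now remove possible empty trace
  have hres : resHyp A K = (A'.image (· ∩ K)).filter (fun J => J.Nonempty) := rfl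
  have hmain : ∀ (S : Finset (Set (Fin n → ℝ))),
      (S.filter (fun J => J.Nonempty) = resHyp A K) → S = A'.image (· ∩ K) →
      ∑ C ∈ S.powerset, (-1:ℤ)^C.card * h C =
      ∑ C ∈ (resHyp A K).powerset, (-1:ℤ)^C.card * h C := by
    intro S hfilter hS
    by_cases hemp : ∅ ∈ S
    · have hSeq : S = insert ∅ (S.erase ∅) := (Finset.insert_erase hemp).symm
      have herase : S.erase ∅ = resHyp A K := by
        rw [← hfilter]
        ext J
        simp only [Finset.mem_erase, Finset.mem_filter, ← Set.nonempty_iff_ne_empty]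
        tauto
      rw [hSeq, Finset.sum_powerset_insert (Finset.notMem_erase ∅ S), herase]
      have : ∀ C ∈ (resHyp A K).powerset, (-1:ℤ)^(insert ∅ C).card * h (insert ∅ C) = 0 := by
        intro C hC
        have : (K ∩ ⋂ J ∈ insert (∅ : Set (Fin n → ℝ)) C, J) = ∅ := by
          rw [Finset.set_biInter_insert]
          ext z; simp
        rw [hhdef]
        simp only [this]
        rw [if_neg (by simp [Set.not_nonempty_empty])]
        ring
      rw [Finset.sum_congr rfl this, Finset.sum_const, smul_zero, add_zero]
    · have : S = resHyp A K := by
        rw [← hfilter]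
        ext J
        simp only [Finset.mem_filter, iff_self_and]
        intro hJ
        rw [Set.nonempty_iff_ne_empty]
        intro hh
        rw [hh] at hJ
        exact hemp hJ
      rw [this]
  rw [hmain (A'.image (· ∩ K)) hres.symm rfl]
  rw [Wsum]
  refine Finset.sum_congr rfl ?_
  intro C hC
  rw [hhdef]
  by_cases hne : (K ∩ ⋂ J ∈ C, J).Nonempty
  · simp only [if_pos hne]
    rw [pow_add, pow_add]
    ring
  · simp only [if_neg hne, mul_zero]

lemma regn_empty (E : Set (Fin n → ℝ)) : regn E ∅ = E := by
  simp [regn]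

lemma cells_empty {E : Set (Fin n → ℝ)} (hEne : E.Nonempty) :
    Cells E (∅ : Finset (Set (Fin n → ℝ))) = {E} := by
  have hcell : ∀ x, cell E ∅ x = E := by
    intro x
    ext y
    simp [cell]
  ext c
  simp only [Cells, regn_empty, Set.mem_setOf_eq, Set.mem_singleton_iff]
  constructor
  · rintro ⟨x, hx, rfl⟩
    exact hcell x
  · rintro rfl
    exact ⟨hEne.choose, hEne.choose_spec, (hcell _).symm⟩

theorem cells_eq_wsum : ∀ (N : ℕ) (A : Finset (Set (Fin n → ℝ))) (E : Set (Fin n → ℝ))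
    (W : Submodule ℝ (Fin n → ℝ)), A.card ≤ N → IsFlat E W →
    (∀ K ∈ A, RelHyp E K) → ((Cells E A).ncard : ℤ) = Wsum E A := by
  intro N
  induction N with
  | zero =>
    intro A E W hcard hE hA
    have : A = ∅ := Finset.card_eq_zero.mp (Nat.le_zero.mp hcard)
    subst this
    rw [cells_empty hE.nonempty, Set.ncard_singleton, wsum_empty hE.nonempty]
    norm_num
  | succ N ih =>
    intro A E W hcard hE hA
    rcases Finset.eq_empty_or_nonempty A with rfl | ⟨K, hK⟩
    · rw [cells_empty hE.nonempty, Set.ncard_singleton, wsum_empty hE.nonempty]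
      norm_num
    · obtain ⟨WK, hWKflat, -⟩ := (hA K hK).flat hE
      have h1 : (A.erase K).card ≤ N := by
        have := Finset.card_erase_of_mem hK
        omega
      have h2 : (resHyp A K).card ≤ N := by
        have hc1 : (resHyp A K).card ≤ ((A.erase K).image (· ∩ K)).card :=
          Finset.card_filter_le _ _
        have hc2 := Finset.card_image_le (s := A.erase K) (f := (· ∩ K))
        omega
      rw [cells_rec hE hA hK, wsum_rec hE hA hK]
      push_cast
      rw [ih (A.erase K) E W h1 hE (fun K' h => hA K' (Finset.mem_of_mem_erase h)),
        ih (resHyp A K) K WK h2 hWKflat (resHyp_relHyp hE hA hK)]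

section Poset

lemma hyp_dmap {H : Set (Fin n → ℝ)} (h : IsAffineHyperplane H) :
    ∃ a b, a ≠ 0 ∧ H = {x | dmap a x = b} := h

lemma sumsq_pos {a : Fin n → ℝ} (ha : a ≠ 0) : 0 < ∑ i, a i ^ 2 := by
  have ha' : ∃ i, a i ≠ 0 := by
    by_contra h
    push_neg at h
    exact ha (funext h)
  obtain ⟨i, hi⟩ := ha'
  exact Finset.sum_pos' (fun j _ => sq_nonneg _) ⟨i, Finset.mem_univ i, by positivity⟩

lemma hyp_relHyp {H : Set (Fin n → ℝ)} (h : IsAffineHyperplane H) :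
    RelHyp Set.univ H := by
  obtain ⟨a, b, ha, rfl⟩ := h
  have hssq := sumsq_pos ha
  set s := ∑ i, a i ^ 2 with hs
  have hdval : ∀ c : ℝ, dmap a (c • a) = c * s := by
    intro c
    rw [dmap_apply, hs, Finset.mul_sum]
    refine Finset.sum_congr rfl fun i _ => ?_
    simp [Pi.smul_apply, smul_eq_mul]
    ring
  have hmem : ((b / s) • a) ∈ {x | ∑ i, a i * x i = b} := by
    show ∑ i, a i * ((b / s) • a) i = b
    have := hdval (b / s)
    rw [dmap_apply] at this
    rw [this]
    field_simp
  refine ⟨a, b, ?_, ⟨_, hmem⟩, ?_⟩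
  · rw [Set.univ_inter]
    rfl
  · intro hsub
    have h1 : ((b / s + 1) • a) ∈ {x | dmap a x = b} := hsub (Set.mem_univ _)
    have h2 := hdval (b / s + 1)
    have h3 : dmap a ((b / s + 1) • a) = b := h1
    rw [h3] at h2
    have : b / s * s = b := by field_simp
    nlinarith

lemma hyp_ne_univ {H : Set (Fin n → ℝ)} (h : IsAffineHyperplane H) : H ≠ Set.univ := by
  have hrel := hyp_relHyp h
  obtain ⟨a, b, hrep, -, hns⟩ := hrel
  intro hH
  apply hns
  rw [hH, Set.univ_inter] at hrep
  rw [← hrep]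

variable {A : Finset (Set (Fin n → ℝ))}

lemma le_def' (x y : IntersectionPoset A) : x ≤ y ↔ y.1 ⊆ x.1 := Iff.rfl

lemma bot_le' (x : IntersectionPoset A) : IntersectionPoset.bot A ≤ x :=
  Set.subset_univ _

lemma biInter_flat (hA : ∀ H ∈ A, IsAffineHyperplane H) :
    ∀ B : Finset (Set (Fin n → ℝ)), B ⊆ A →
      (⋂ H ∈ B, (H : Set (Fin n → ℝ))).Nonempty →
      ∃ W, IsFlat (⋂ H ∈ B, (H : Set (Fin n → ℝ))) W := by
  intro B
  induction B using Finset.induction with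
  | empty => intro _ _; exact ⟨⊤, by simpa using IsFlat.univ⟩
  | @insert H B hH ih =>
    intro hBA hne
    rw [Finset.set_biInter_insert] at hne ⊢
    have hHA : H ∈ A := hBA (Finset.mem_insert_self H B)
    have hBA' : B ⊆ A := fun K hK => hBA (Finset.mem_insert_of_mem hK)
    have hBne : (⋂ H ∈ B, (H : Set (Fin n → ℝ))).Nonempty :=
      hne.mono Set.inter_subset_right
    obtain ⟨W, hW⟩ := ih hBA' hBne
    obtain ⟨a, b, ha, hHeq⟩ := hA H hHA
    have hHne : H.Nonempty := hne.mono Set.inter_subset_left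
    have hHflat : IsFlat H (LinearMap.ker (dmap a)) := by
      rw [hHeq]
      exact isFlat_hyp (hHeq ▸ hHne)
    exact ⟨_, hHflat.inter hW hne⟩

lemma elem_flat (hA : ∀ H ∈ A, IsAffineHyperplane H) (x : IntersectionPoset A) :
    ∃ W, IsFlat x.1 W := by
  obtain ⟨hne, B, hBA, hBeq⟩ := x.2
  rw [hBeq]
  exact biInter_flat hA B hBA (hBeq ▸ hne)

lemma edim_univ_eq : edim (Set.univ : Set (Fin n → ℝ)) = n := by
  rw [IsFlat.univ.edim_eq, finrank_top, Module.finrank_fin_fun]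

lemma edim_le_n {S : Set (Fin n → ℝ)} {W} (hS : IsFlat S W) : edim S ≤ n := by
  rw [hS.edim_eq]
  have := Submodule.finrank_le W
  rwa [Module.finrank_fin_fun] at this

lemma eq_univ_of_edim {S : Set (Fin n → ℝ)} {W} (hS : IsFlat S W) (h : n ≤ edim S) :
    S = Set.univ := by
  refine hS.eq_of_subset_of_finrank_le IsFlat.univ (Set.subset_univ _) ?_
  rw [← hS.edim_eq]
  rw [finrank_top, Module.finrank_fin_fun]
  exact h

lemma edim_lt_of_ssubset {S T : Set (Fin n → ℝ)} {W U} (hS : IsFlat S W) (hT : IsFlat T U)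
    (hsub : S ⊆ T) (hne : S ≠ T) : edim S < edim T := by
  by_contra h
  push_neg at h
  exact hne (hS.eq_of_subset_of_finrank_le hT hsub (by rw [← hS.edim_eq, ← hT.edim_eq]; exact h))

/-- The Whitney-sum function on the intersection poset. -/
noncomputable def wfn (A : Finset (Set (Fin n → ℝ))) (x : IntersectionPoset A) : ℤ :=
  ∑ B ∈ A.powerset.filter (fun B => (⋂ H ∈ B, (H : Set (Fin n → ℝ))) = x.1), (-1:ℤ)^B.card

lemma wfn_sum (hA : ∀ H ∈ A, IsAffineHyperplane H) (x : IntersectionPoset A) :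
    ∑ y ∈ Finset.Icc (IntersectionPoset.bot A) x, wfn A y =
      if IntersectionPoset.bot A = x then 1 else 0 := by
  classical
  set g : Finset (Set (Fin n → ℝ)) → IntersectionPoset A := fun B =>
    if h : (⋂ H ∈ B, (H : Set (Fin n → ℝ))).Nonempty ∧ B ⊆ A then
      ⟨⋂ H ∈ B, (H : Set (Fin n → ℝ)), h.1, B, h.2, rfl⟩
    else IntersectionPoset.bot A with hg
  set s := A.powerset.filter (fun B => x.1 ⊆ ⋂ H ∈ B, (H : Set (Fin n → ℝ))) with hs
  have hmaps : ∀ B ∈ s, g B ∈ Finset.Icc (IntersectionPoset.bot A) x := by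
    intro B hB
    rw [hs, Finset.mem_filter, Finset.mem_powerset] at hB
    have hcond : (⋂ H ∈ B, (H : Set (Fin n → ℝ))).Nonempty ∧ B ⊆ A :=
      ⟨x.2.1.mono hB.2, hB.1⟩
    rw [Finset.mem_Icc]
    refine ⟨bot_le' _, ?_⟩
    show x.1 ⊆ (g B).1
    rw [hg]
    dsimp only; erw [dif_pos hcond]
    exact hB.2
  have hfib := Finset.sum_fiberwise_of_maps_to hmaps (fun B => (-1:ℤ)^B.card)
  have hinner : ∀ y ∈ Finset.Icc (IntersectionPoset.bot A) x,
      (s.filter (fun B => g B = y)) =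
      A.powerset.filter (fun B => (⋂ H ∈ B, (H : Set (Fin n → ℝ))) = y.1) := by
    intro y hy
    rw [Finset.mem_Icc] at hy
    ext B
    simp only [Finset.mem_filter, Finset.mem_powerset, hs]
    constructor
    · rintro ⟨⟨hBA, hxB⟩, hgB⟩
      have hcond : (⋂ H ∈ B, (H : Set (Fin n → ℝ))).Nonempty ∧ B ⊆ A :=
        ⟨x.2.1.mono hxB, hBA⟩
      refine ⟨hBA, ?_⟩
      rw [← hgB, hg]
      dsimp only; erw [dif_pos hcond]
    · rintro ⟨hBA, hBy⟩
      have hxy : x.1 ⊆ y.1 := hy.2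
      have hcond : (⋂ H ∈ B, (H : Set (Fin n → ℝ))).Nonempty ∧ B ⊆ A :=
        ⟨hBy ▸ y.2.1, hBA⟩
      refine ⟨⟨hBA, hBy ▸ hxy⟩, ?_⟩
      rw [hg]
      dsimp only; erw [dif_pos hcond]
      exact Subtype.ext hBy
  have heq1 : ∑ y ∈ Finset.Icc (IntersectionPoset.bot A) x, wfn A y =
      ∑ B ∈ s, (-1:ℤ)^B.card := by
    rw [← hfib]
    refine Finset.sum_congr rfl fun y hy => ?_
    rw [wfn, hinner y hy]
  rw [heq1]
  have hs2 : s = (A.filter (fun H => x.1 ⊆ H)).powerset := by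
    ext B
    rw [hs]
    simp only [Finset.mem_filter, Finset.mem_powerset]
    constructor
    · rintro ⟨hBA, hxB⟩
      intro H hH
      rw [Finset.mem_filter]
      exact ⟨hBA hH, hxB.trans (Set.biInter_subset_of_mem hH)⟩
    · intro hBf
      refine ⟨fun H hH => (Finset.mem_filter.mp (hBf hH)).1, ?_⟩
      intro z hz
      rw [Set.mem_iInter₂]
      intro H hH
      exact (Finset.mem_filter.mp (hBf hH)).2 hz
  rw [hs2, Finset.sum_powerset_neg_one_pow_card]
  congr 1
  have : (A.filter (fun H => x.1 ⊆ H) = ∅) ↔ (IntersectionPoset.bot A = x) := by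
    constructor
    · intro hempty
      obtain ⟨hne, B, hBA, hBeq⟩ := x.2
      have hB : B ⊆ A.filter (fun H => x.1 ⊆ H) := by
        intro H hH
        rw [Finset.mem_filter]
        exact ⟨hBA hH, hBeq ▸ Set.biInter_subset_of_mem hH⟩
      rw [hempty, Finset.subset_empty] at hB
      subst hB
      refine (Subtype.ext ?_)
      show Set.univ = x.1
      rw [hBeq]
      simp
    · intro hbot
      rw [Finset.eq_empty_iff_forall_notMem]
      intro H hH
      rw [Finset.mem_filter] at hH
      have hx1 : x.1 = Set.univ := by rw [← hbot]; rfl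
      rw [hx1] at hH
      exact hyp_ne_univ (hA H hH.1) (Set.eq_univ_of_univ_subset hH.2)
  simp only [this]

lemma eq_mu (hA : ∀ H ∈ A, IsAffineHyperplane H) (f : IntersectionPoset A → ℤ)
    (hf : ∀ x, ∑ y ∈ Finset.Icc (IntersectionPoset.bot A) x, f y =
      if IntersectionPoset.bot A = x then 1 else 0) :
    ∀ x, f x = IncidenceAlgebra.mu ℤ (IntersectionPoset.bot A) x := by
  classical
  intro x
  generalize hm : (Finset.Icc (IntersectionPoset.bot A) x).card = m
  induction m using Nat.strong_induction_on generalizing x with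
  | _ m ih =>
    have hxmem : x ∈ Finset.Icc (IntersectionPoset.bot A) x :=
      Finset.mem_Icc.mpr ⟨bot_le' _, le_refl _⟩
    have hsplit1 := Finset.sum_erase_add (Finset.Icc (IntersectionPoset.bot A) x) f hxmem
    have hsplit2 := Finset.sum_erase_add (Finset.Icc (IntersectionPoset.bot A) x)
      (IncidenceAlgebra.mu ℤ (IntersectionPoset.bot A)) hxmem
    have hmu := IncidenceAlgebra.sum_Icc_mu_right (𝕜 := ℤ) (IntersectionPoset.bot A) x
    have hfx := hf x
    have hsums : ∑ y ∈ (Finset.Icc (IntersectionPoset.bot A) x).erase x, f y =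
        ∑ y ∈ (Finset.Icc (IntersectionPoset.bot A) x).erase x,
          IncidenceAlgebra.mu ℤ (IntersectionPoset.bot A) y := by
      refine Finset.sum_congr rfl fun y hy => ?_
      rw [Finset.mem_erase, Finset.mem_Icc] at hy
      have hcard : (Finset.Icc (IntersectionPoset.bot A) y).card < m := by
        rw [← hm]
        refine Finset.card_lt_card ?_
        rw [Finset.ssubset_iff_of_subset]
        · exact ⟨x, hxmem, fun hx => hy.1 (le_antisymm hy.2.2 (Finset.mem_Icc.mp hx).2)⟩
        · intro z hz
          rw [Finset.mem_Icc] at hz ⊢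
          exact ⟨hz.1, hz.2.trans hy.2.2⟩
      exact ih _ hcard y rfl
    rw [← hsplit1, hsums] at hfx
    rw [← hsplit2] at hmu
    linarith
/-- Whitney's theorem: the Möbius function is the signed sum over subsets. -/
lemma wfn_eq_mu (hA : ∀ H ∈ A, IsAffineHyperplane H) (x : IntersectionPoset A) :
    wfn A x = IncidenceAlgebra.mu ℤ (IntersectionPoset.bot A) x :=
  eq_mu hA (wfn A) (fun y => wfn_sum hA y) x

end Poset

section Sign

variable {A : Finset (Set (Fin n → ℝ))}

lemma weisner (hA : ∀ H ∈ A, IsAffineHyperplane H) {x : IntersectionPoset A}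
    {H : Set (Fin n → ℝ)} (hH : H ∈ A) (hxH : x.1 ⊆ H) :
    ∑ y ∈ (Finset.Icc (IntersectionPoset.bot A) x).filter (fun y => y.1 ∩ H = x.1),
      IncidenceAlgebra.mu ℤ (IntersectionPoset.bot A) y = 0 := by
  classical
  have hHne : H.Nonempty := by
    obtain ⟨a, b, hrep, hne, -⟩ := hyp_relHyp (hA H hH)
    exact hne
  have hHcar : (⋂ K ∈ ({H} : Finset (Set (Fin n → ℝ))), (K : Set (Fin n → ℝ))) = H := by simp
  set H' : IntersectionPoset A :=
    ⟨H, hHne, {H}, Finset.singleton_subset_iff.mpr hH, hHcar.symm⟩ with hH'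
  set r : IntersectionPoset A → IntersectionPoset A := fun y =>
    if h : (y.1 ∩ H).Nonempty then
      ⟨y.1 ∩ H, h, insert H y.2.2.choose,
        Finset.insert_subset_iff.mpr ⟨hH, y.2.2.choose_spec.1⟩, by
          rw [Finset.set_biInter_insert, ← y.2.2.choose_spec.2, Set.inter_comm]⟩
    else IntersectionPoset.bot A with hr
  have hrval : ∀ y, (y.1 ∩ H).Nonempty → (r y).1 = y.1 ∩ H := by
    intro y h
    rw [hr]
    dsimp only; erw [dif_pos h]
  suffices hclaim : ∀ (m : ℕ) (w : IntersectionPoset A), H' ≤ w → w ≤ x →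
      (Finset.Icc H' w).card = m →
      ∑ y ∈ (Finset.Icc (IntersectionPoset.bot A) x).filter (fun y => y.1 ∩ H = w.1),
        IncidenceAlgebra.mu ℤ (IntersectionPoset.bot A) y = 0 by
    refine hclaim _ x hxH (le_refl x) rfl
  intro m
  induction m using Nat.strong_induction_on with
  | _ m ih =>
    intro w hH'w hwx hm
    set sw := (Finset.Icc (IntersectionPoset.bot A) x).filter (fun y => w.1 ⊆ y.1) with hsw
    have hwH : w.1 ⊆ H := hH'w
    have hmaps : ∀ y ∈ sw, r y ∈ Finset.Icc H' w := by
      intro y hy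
      rw [hsw, Finset.mem_filter] at hy
      have hne : (y.1 ∩ H).Nonempty := w.2.1.mono (Set.subset_inter hy.2 hwH)
      rw [Finset.mem_Icc]
      constructor
      · show (r y).1 ⊆ H
        rw [hrval y hne]
        exact Set.inter_subset_right
      · show w.1 ⊆ (r y).1
        rw [hrval y hne]
        exact Set.subset_inter hy.2 hwH
    have hfib := Finset.sum_fiberwise_of_maps_to hmaps
      (IncidenceAlgebra.mu ℤ (IntersectionPoset.bot A))
    have hinner : ∀ z ∈ Finset.Icc H' w, sw.filter (fun y => r y = z) =
        (Finset.Icc (IntersectionPoset.bot A) x).filter (fun y => y.1 ∩ H = z.1) := by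
      intro z hz
      rw [Finset.mem_Icc] at hz
      have hzH : z.1 ⊆ H := hz.1
      have hwz : w.1 ⊆ z.1 := hz.2
      ext y
      rw [hsw]
      simp only [Finset.mem_filter]
      constructor
      · rintro ⟨⟨hyIcc, hwy⟩, hry⟩
        have hne : (y.1 ∩ H).Nonempty := w.2.1.mono (Set.subset_inter hwy hwH)
        refine ⟨hyIcc, ?_⟩
        rw [← hry, hrval y hne]
      · rintro ⟨hyIcc, hyH⟩
        have hwy : w.1 ⊆ y.1 := by
          intro t ht
          exact ((hyH ▸ hwz) ht).1
        have hne : (y.1 ∩ H).Nonempty := by rw [hyH]; exact z.2.1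
        refine ⟨⟨hyIcc, hwy⟩, ?_⟩
        refine Subtype.ext ?_
        rw [hrval y hne, hyH]
    have htotal : ∑ y ∈ sw, IncidenceAlgebra.mu ℤ (IntersectionPoset.bot A) y = 0 := by
      have hswIcc : sw = Finset.Icc (IntersectionPoset.bot A) w := by
        ext y
        rw [hsw]
        simp only [Finset.mem_filter, Finset.mem_Icc]
        constructor
        · rintro ⟨⟨-, -⟩, hwy⟩
          exact ⟨bot_le' _, hwy⟩
        · rintro ⟨-, hyw⟩
          exact ⟨⟨bot_le' _, le_trans hyw hwx⟩, hyw⟩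
      rw [hswIcc, IncidenceAlgebra.sum_Icc_mu_right]
      rw [if_neg]
      intro hbw
      have : w.1 = Set.univ := by rw [← hbw]; rfl
      exact hyp_ne_univ (hA H hH) (Set.eq_univ_of_univ_subset (this ▸ hwH))
    set g2 : IntersectionPoset A → ℤ := fun z =>
      ∑ y ∈ (Finset.Icc (IntersectionPoset.bot A) x).filter (fun y => y.1 ∩ H = z.1),
        IncidenceAlgebra.mu ℤ (IntersectionPoset.bot A) y with hg2
    have hzero : ∑ z ∈ Finset.Icc H' w, g2 z = 0 := by
      have h1 : ∀ z ∈ Finset.Icc H' w, g2 z =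
          ∑ y ∈ sw.filter (fun y => r y = z),
            IncidenceAlgebra.mu ℤ (IntersectionPoset.bot A) y := by
        intro z hz
        rw [hg2]
        rw [hinner z hz]
      rw [Finset.sum_congr rfl h1, hfib]
      exact htotal
    have hwmem : w ∈ Finset.Icc H' w := Finset.mem_Icc.mpr ⟨hH'w, le_refl w⟩
    have hsplit := Finset.sum_erase_add (Finset.Icc H' w) g2 hwmem
    have herase : ∀ z ∈ (Finset.Icc H' w).erase w, g2 z = 0 := by
      intro z hz
      rw [Finset.mem_erase, Finset.mem_Icc] at hz
      have hcard : (Finset.Icc H' z).card < m := by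
        rw [← hm]
        refine Finset.card_lt_card ?_
        rw [Finset.ssubset_iff_of_subset]
        · exact ⟨w, hwmem, fun hw => hz.1 (le_antisymm hz.2.2 (Finset.mem_Icc.mp hw).2)⟩
        · intro u hu
          rw [Finset.mem_Icc] at hu ⊢
          exact ⟨hu.1, hu.2.trans hz.2.2⟩
      exact ih _ hcard z hz.2.1 (le_trans hz.2.2 hwx) rfl
    have herase0 : ∑ z ∈ (Finset.Icc H' w).erase w, g2 z = 0 := Finset.sum_eq_zero herase
    have : g2 w = 0 := by
      rw [herase0, zero_add] at hsplit
      rw [hsplit]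
      exact hzero
    exact this

lemma mu_sign (hA : ∀ H ∈ A, IsAffineHyperplane H) :
    ∀ (k : ℕ) (x : IntersectionPoset A), n - edim x.1 = k →
      0 < (-1:ℤ)^(n + edim x.1) * IncidenceAlgebra.mu ℤ (IntersectionPoset.bot A) x := by
  classical
  intro k
  induction k using Nat.strong_induction_on with
  | _ k ih =>
    intro x hk
    by_cases hbot : x = IntersectionPoset.bot A
    · subst hbot
      have hcar : (IntersectionPoset.bot A).1 = (Set.univ : Set (Fin n → ℝ)) := rfl
      rw [IncidenceAlgebra.mu_self, mul_one, hcar, edim_univ_eq, neg_one_pow_even]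
      norm_num
    · have hx1 : x.1 ≠ Set.univ := fun h => hbot (Subtype.ext h)
      obtain ⟨Wx, hWx⟩ := elem_flat hA x
      have hxn : edim x.1 < n := by
        rcases lt_or_eq_of_le (edim_le_n hWx) with h | h
        · exact h
        · exact absurd (eq_univ_of_edim hWx h.ge) hx1
      have hex : ∃ m, ∃ B : Finset (Set (Fin n → ℝ)), B.card = m ∧ B ⊆ A ∧
          (⋂ H ∈ B, (H : Set (Fin n → ℝ))) = x.1 := by
        obtain ⟨-, B, hBA, hBeq⟩ := x.2
        exact ⟨B.card, B, rfl, hBA, hBeq.symm⟩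
      obtain ⟨B₀, hB₀card, hB₀A, hB₀eq⟩ := Nat.find_spec hex
      have hB₀ne : B₀.Nonempty := by
        rw [Finset.nonempty_iff_ne_empty]
        rintro rfl
        apply hx1
        rw [← hB₀eq]
        simp
      obtain ⟨H, hH⟩ := hB₀ne
      have hHA : H ∈ A := hB₀A hH
      have hxH : x.1 ⊆ H := hB₀eq ▸ Set.biInter_subset_of_mem hH
      have hy₀sub : x.1 ⊆ ⋂ K ∈ B₀.erase H, (K : Set (Fin n → ℝ)) := by
        rw [← hB₀eq]
        intro z hz
        rw [Set.mem_iInter₂] at hz ⊢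
        intro K hK
        exact hz K (Finset.mem_of_mem_erase hK)
      have hy₀ne : (⋂ K ∈ B₀.erase H, (K : Set (Fin n → ℝ))).Nonempty :=
        x.2.1.mono hy₀sub
      set y₀ : IntersectionPoset A :=
        ⟨⋂ K ∈ B₀.erase H, (K : Set (Fin n → ℝ)), hy₀ne, B₀.erase H,
          fun K hK => hB₀A (Finset.mem_of_mem_erase hK), rfl⟩ with hy₀def
      have hy₀H : y₀.1 ∩ H = x.1 := by
        rw [← hB₀eq, ← Finset.insert_erase hH, Finset.set_biInter_insert]
        show (⋂ K ∈ B₀.erase H, (K : Set (Fin n → ℝ))) ∩ H = _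
        rw [Set.inter_comm]
      have hy₀x : y₀ ≠ x := by
        intro h
        have hcard1 : 1 ≤ B₀.card := Finset.card_pos.mpr ⟨H, hH⟩
        have hlt : (B₀.erase H).card < Nat.find hex := by
          rw [Finset.card_erase_of_mem hH, ← hB₀card]
          omega
        exact Nat.find_min hex hlt ⟨B₀.erase H, rfl,
          fun K hK => hB₀A (Finset.mem_of_mem_erase hK), congrArg Subtype.val h⟩
      set S := (Finset.Icc (IntersectionPoset.bot A) x).filter
        (fun y => y.1 ∩ H = x.1 ∧ y ≠ x) with hS
      have hw := weisner hA hHA hxH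
      have hfull : (Finset.Icc (IntersectionPoset.bot A) x).filter
          (fun y => y.1 ∩ H = x.1) = insert x S := by
        ext y
        rw [hS]
        simp only [Finset.mem_filter, Finset.mem_insert]
        constructor
        · rintro ⟨hyIcc, hyH⟩
          by_cases hyx : y = x
          · exact Or.inl hyx
          · exact Or.inr ⟨hyIcc, hyH, hyx⟩
        · rintro (rfl | ⟨h1, h2, h3⟩)
          · exact ⟨Finset.mem_Icc.mpr ⟨bot_le' _, le_refl _⟩, Set.inter_eq_left.mpr hxH⟩
          · exact ⟨h1, h2⟩
      rw [hfull, Finset.sum_insert (by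
        rw [hS]
        simp only [Finset.mem_filter]
        rintro ⟨-, -, h⟩
        exact h rfl)] at hw
      have hedim : ∀ y ∈ S, edim y.1 = edim x.1 + 1 := by
        intro y hy
        rw [hS, Finset.mem_filter] at hy
        obtain ⟨hyIcc, hyH, hyx⟩ := hy
        obtain ⟨Wy, hWy⟩ := elem_flat hA y
        have hxsuby : x.1 ⊆ y.1 := by
          rw [← hyH]; exact Set.inter_subset_left
        have hxney : x.1 ≠ y.1 := fun h => hyx (Subtype.ext h.symm)
        have hlt : edim x.1 < edim y.1 := edim_lt_of_ssubset hWx hWy hxsuby hxney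
        obtain ⟨a, b, ha, hHeq⟩ := hA H hHA
        have hHne2 : H.Nonempty := x.2.1.mono hxH
        have hHflat : IsFlat H (LinearMap.ker (dmap a)) := by
          rw [hHeq]
          exact isFlat_hyp (hHeq ▸ hHne2)
        have hxflat : IsFlat x.1 (Wy ⊓ LinearMap.ker (dmap a)) := by
          rw [← hyH]
          exact hWy.inter hHflat (hyH ▸ x.2.1)
        have h1 : edim x.1 = Module.finrank ℝ
            (Wy ⊓ LinearMap.ker (dmap a) : Submodule ℝ (Fin n → ℝ)) := hxflat.edim_eq
        have h2 := finrank_inf_ker_ge Wy (dmap a)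
        rw [hWy.edim_eq]
        rw [hWy.edim_eq] at hlt
        omega
      have hy₀S : y₀ ∈ S := by
        rw [hS, Finset.mem_filter, Finset.mem_Icc]
        exact ⟨⟨bot_le' _, hy₀sub⟩, hy₀H, hy₀x⟩
      have hpos : 0 < ∑ y ∈ S, (-1:ℤ)^(n + edim y.1) *
          IncidenceAlgebra.mu ℤ (IntersectionPoset.bot A) y := by
        refine Finset.sum_pos (fun y hy => ?_) ⟨y₀, hy₀S⟩
        have hy1 := hedim y hy
        have hk1 : n - edim y.1 = k - 1 := by omega
        have hklt : k - 1 < k := by omega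
        exact ih (k - 1) hklt y hk1
      have hrw : ∀ y ∈ S, (-1:ℤ)^(n + edim y.1) *
          IncidenceAlgebra.mu ℤ (IntersectionPoset.bot A) y =
          -((-1:ℤ)^(n + edim x.1)) * IncidenceAlgebra.mu ℤ (IntersectionPoset.bot A) y := by
        intro y hy
        rw [hedim y hy]
        have : n + (edim x.1 + 1) = (n + edim x.1) + 1 := by omega
        rw [this, pow_succ]
        ring_nf
      rw [Finset.sum_congr rfl hrw] at hpos
      have hmux : IncidenceAlgebra.mu ℤ (IntersectionPoset.bot A) x =
          -∑ y ∈ S, IncidenceAlgebra.mu ℤ (IntersectionPoset.bot A) y := by linarith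
      have hfin : (-1:ℤ)^(n + edim x.1) *
          -∑ y ∈ S, IncidenceAlgebra.mu ℤ (IntersectionPoset.bot A) y =
          ∑ y ∈ S, -(-1:ℤ)^(n + edim x.1) *
            IncidenceAlgebra.mu ℤ (IntersectionPoset.bot A) y := by
        rw [mul_neg, Finset.mul_sum, ← Finset.sum_neg_distrib]
        exact Finset.sum_congr rfl fun y _ => by ring
      rw [hmux, hfin]
      exact hpos

end Sign

section Final

variable {A : Finset (Set (Fin n → ℝ))}

lemma natAbs_mu (hA : ∀ H ∈ A, IsAffineHyperplane H) (x : IntersectionPoset A) :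
    ((IncidenceAlgebra.mu ℤ (IntersectionPoset.bot A) x).natAbs : ℤ) =
    (-1:ℤ)^(n + edim x.1) * IncidenceAlgebra.mu ℤ (IntersectionPoset.bot A) x := by
  have hpos := mu_sign hA (n - edim x.1) x rfl
  set c := (-1:ℤ)^(n + edim x.1) with hc
  set m := IncidenceAlgebra.mu ℤ (IntersectionPoset.bot A) x with hm
  have habsc : |c| = 1 := by rw [hc, abs_pow, abs_neg, abs_one, one_pow]
  calc ((m.natAbs : ℤ)) = |m| := (Int.abs_eq_natAbs m).symm
    _ = |c| * |m| := by rw [habsc, one_mul]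
    _ = |c * m| := (abs_mul c m).symm
    _ = c * m := abs_of_pos hpos

lemma sum_muabs_eq_wsum (hA : ∀ H ∈ A, IsAffineHyperplane H) :
    ((∑ x : IntersectionPoset A,
      (IncidenceAlgebra.mu ℤ (IntersectionPoset.bot A) x).natAbs : ℕ) : ℤ) =
    Wsum Set.univ A := by
  classical
  rw [Nat.cast_sum]
  have h1 : ∀ x : IntersectionPoset A,
      ((IncidenceAlgebra.mu ℤ (IntersectionPoset.bot A) x).natAbs : ℤ) =
      (-1:ℤ)^(n + edim x.1) * wfn A x := by
    intro x
    rw [natAbs_mu hA x, wfn_eq_mu hA x]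
  rw [Finset.sum_congr rfl (fun x _ => h1 x)]
  set F : Finset (Set (Fin n → ℝ)) → ℤ := fun B =>
    (-1:ℤ)^(B.card + n + edim (⋂ H ∈ B, (H : Set (Fin n → ℝ)))) with hF
  set s := A.powerset.filter
    (fun B => (⋂ H ∈ B, (H : Set (Fin n → ℝ))).Nonempty) with hs
  set g : Finset (Set (Fin n → ℝ)) → IntersectionPoset A := fun B =>
    if h : (⋂ H ∈ B, (H : Set (Fin n → ℝ))).Nonempty ∧ B ⊆ A then
      ⟨⋂ H ∈ B, (H : Set (Fin n → ℝ)), h.1, B, h.2, rfl⟩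
    else IntersectionPoset.bot A with hg
  have hmaps : ∀ B ∈ s, g B ∈ (Finset.univ : Finset (IntersectionPoset A)) :=
    fun _ _ => Finset.mem_univ _
  have hfib := Finset.sum_fiberwise_of_maps_to hmaps F
  have hinner : ∀ x : IntersectionPoset A,
      ∑ B ∈ s.filter (fun B => g B = x), F B = (-1:ℤ)^(n + edim x.1) * wfn A x := by
    intro x
    have hfe : s.filter (fun B => g B = x) =
        A.powerset.filter (fun B => (⋂ H ∈ B, (H : Set (Fin n → ℝ))) = x.1) := by
      ext B
      constructor
      · intro hB
        rw [Finset.mem_filter] at hB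
        obtain ⟨hBs, hgB⟩ := hB
        rw [hs, Finset.mem_filter, Finset.mem_powerset] at hBs
        obtain ⟨hBA, hne⟩ := hBs
        rw [Finset.mem_filter, Finset.mem_powerset]
        refine ⟨hBA, ?_⟩
        rw [← hgB, hg]
        dsimp only; erw [dif_pos (And.intro hne hBA)]
      · intro hB
        rw [Finset.mem_filter, Finset.mem_powerset] at hB
        obtain ⟨hBA, hBeq⟩ := hB
        have hne : (⋂ H ∈ B, (H : Set (Fin n → ℝ))).Nonempty := hBeq ▸ x.2.1
        rw [Finset.mem_filter]
        refine ⟨by rw [hs, Finset.mem_filter, Finset.mem_powerset]; exact ⟨hBA, hne⟩, ?_⟩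
        rw [hg]
        dsimp only; erw [dif_pos (And.intro hne hBA)]
        exact Subtype.ext hBeq
    rw [hfe, wfn, Finset.mul_sum]
    refine Finset.sum_congr rfl fun B hB => ?_
    have hBx := (Finset.mem_filter.mp hB).2
    rw [hF]
    simp only [hBx]
    rw [show B.card + n + edim x.1 = (n + edim x.1) + B.card by omega, pow_add]
  have hstep : ∑ x : IntersectionPoset A, (-1:ℤ)^(n + edim x.1) * wfn A x =
      ∑ B ∈ s, F B := by
    rw [← hfib]
    exact Finset.sum_congr rfl fun x _ => (hinner x).symm
  rw [hstep]
  rw [Wsum]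
  have : ∀ B ∈ A.powerset,
      (if (Set.univ ∩ ⋂ K ∈ B, (K : Set (Fin n → ℝ))).Nonempty then
        (-1:ℤ)^(B.card + edim (Set.univ : Set (Fin n → ℝ)) +
          edim (Set.univ ∩ ⋂ K ∈ B, (K : Set (Fin n → ℝ)))) else 0) =
      (if (⋂ K ∈ B, (K : Set (Fin n → ℝ))).Nonempty then F B else 0) := by
    intro B _
    rw [Set.univ_inter, edim_univ_eq, hF]
  have hright : ∑ B ∈ A.powerset,
      (if (⋂ K ∈ B, (K : Set (Fin n → ℝ))).Nonempty then F B else 0) = ∑ B ∈ s, F B := by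
    rw [hs, Finset.sum_filter]
  rw [Finset.sum_congr rfl this, hright]

lemma regions_eq_cells (hA : ∀ H ∈ A, IsAffineHyperplane H) :
    {C : Set (Fin n → ℝ) | ∃ x ∈ (⋃ H ∈ A, (H : Set (Fin n → ℝ)))ᶜ,
      C = connectedComponentIn (⋃ H ∈ A, (H : Set (Fin n → ℝ)))ᶜ x} =
    Cells Set.univ A := by
  have hA' : ∀ K ∈ A, RelHyp Set.univ K := fun K hK => hyp_relHyp (hA K hK)
  have hreg : (⋃ H ∈ A, (H : Set (Fin n → ℝ)))ᶜ = regn Set.univ A := by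
    rw [regn, Set.compl_eq_univ_diff]
  rw [hreg]
  ext C
  simp only [Set.mem_setOf_eq, Cells]
  constructor
  · rintro ⟨x, hx, rfl⟩
    exact ⟨x, hx, connectedComponentIn_regn IsFlat.univ hA' hx⟩
  · rintro ⟨x, hx, rfl⟩
    exact ⟨x, hx, (connectedComponentIn_regn IsFlat.univ hA' hx).symm⟩

end Final

end Zas

open scoped Classical in
/-- **Zaslavsky's theorem.** For a finite arrangement `A` of affine hyperplanes in `ℝⁿ`,
the number of regions of `A` (connected components of the complement of `⋃_{H ∈ A} H`)
equals `∑_{x ∈ L(A)} |μ(0̂, x)|`, where `μ` is the Möbius function of the intersection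
semilattice `L(A)` and `0̂ = ℝⁿ` is its minimal element. -/
theorem zaslavsky_regions (n : ℕ) (A : Finset (Set (Fin n → ℝ)))
    (hA : ∀ H ∈ A, IsAffineHyperplane H) :
    Nat.card {C : Set (Fin n → ℝ) |
        ∃ x ∈ (⋃ H ∈ A, (H : Set (Fin n → ℝ)))ᶜ,
          C = connectedComponentIn (⋃ H ∈ A, (H : Set (Fin n → ℝ)))ᶜ x} =
      ∑ x : IntersectionPoset A,
        (IncidenceAlgebra.mu ℤ (IntersectionPoset.bot A) x).natAbs := by
  classical
  have h1 : Nat.card {C : Set (Fin n → ℝ) |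
      ∃ x ∈ (⋃ H ∈ A, (H : Set (Fin n → ℝ)))ᶜ,
        C = connectedComponentIn (⋃ H ∈ A, (H : Set (Fin n → ℝ)))ᶜ x} =
      (Zas.Cells Set.univ A).ncard := by
    rw [Nat.card_coe_set_eq, Zas.regions_eq_cells hA]
  have h2 : ((Zas.Cells Set.univ A).ncard : ℤ) = Zas.Wsum Set.univ A :=
    Zas.cells_eq_wsum A.card A Set.univ ⊤ le_rfl Zas.IsFlat.univ
      (fun K hK => Zas.hyp_relHyp (hA K hK))
  have h3 := Zas.sum_muabs_eq_wsum hA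
  have h4 : ((Nat.card {C : Set (Fin n → ℝ) |
      ∃ x ∈ (⋃ H ∈ A, (H : Set (Fin n → ℝ)))ᶜ,
        C = connectedComponentIn (⋃ H ∈ A, (H : Set (Fin n → ℝ)))ᶜ x} : ℕ) : ℤ) =
      ((∑ x : IntersectionPoset A,
        (IncidenceAlgebra.mu ℤ (IntersectionPoset.bot A) x).natAbs : ℕ) : ℤ) := by
    rw [h1, h2, h3]
  exact_mod_cast h4
end

section
/- Let L be a finite distributive lattice, and for each j ≥ 0 let g_j denote the number of elements of L that cover exactly j elements of L. Then for every i ≥ 0, the number of intervals [a, b] of L that are isomorphic as posets to the Boolean lattice of rank i (the lattice of subsets of an i-element set) equals ∑_{j ≥ i} binom(j, i) · g_j. -/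
open Finset

section Infb

variable {L : Type*} [DistribLattice L]

attribute [local instance] Classical.propDecidable

/-- inf of a finset together with an extra element `b`. -/
noncomputable def infb (b : L) (T : Finset L) : L :=
  (insert b T).inf' (Finset.insert_nonempty b T) id

lemma infb_le_b (b : L) (T : Finset L) : infb b T ≤ b :=
  Finset.inf'_le _ (Finset.mem_insert_self b T)

lemma infb_le (b : L) {T : Finset L} {s : L} (h : s ∈ T) : infb b T ≤ s :=
  Finset.inf'_le _ (Finset.mem_insert_of_mem h)

lemma le_infb {x b : L} {T : Finset L} (hb : x ≤ b) (h : ∀ s ∈ T, x ≤ s) : x ≤ infb b T := by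
  refine Finset.le_inf' _ _ ?_
  intro y hy
  rcases Finset.mem_insert.1 hy with rfl | hy
  · exact hb
  · exact h y hy

lemma infb_mono {b : L} {T T' : Finset L} (h : T ⊆ T') : infb b T' ≤ infb b T :=
  le_infb (infb_le_b b T') (fun s hs => infb_le b (h hs))

lemma sup_infb (x b : L) (T : Finset L) :
    x ⊔ infb b T = (insert b T).inf' (Finset.insert_nonempty b T) (fun t => x ⊔ t) :=
  Finset.inf'_sup_distrib_left _ _ _

lemma sup_infb_of_covers {b x : L} {T : Finset L} (hT : ∀ s ∈ T, s ⋖ b) (hx : x ≤ b) :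
    x ⊔ infb b T = infb b (T.filter (fun t => x ≤ t)) := by
  rw [sup_infb]
  apply le_antisymm
  · apply le_infb
    · calc (insert b T).inf' _ (fun t => x ⊔ t) ≤ x ⊔ b :=
            Finset.inf'_le _ (Finset.mem_insert_self b T)
        _ = b := sup_eq_right.2 hx
    · intro s hs
      rcases Finset.mem_filter.1 hs with ⟨hsT, hxs⟩
      calc (insert b T).inf' _ (fun t => x ⊔ t) ≤ x ⊔ s :=
            Finset.inf'_le _ (Finset.mem_insert_of_mem hsT)
        _ = s := sup_eq_right.2 hxs
  · apply Finset.le_inf'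
    intro y hy
    rcases Finset.mem_insert.1 hy with hyb | hy
    · exact le_trans (infb_le_b _ _) (by rw [hyb]; exact le_sup_right)
    · by_cases hxy : x ≤ y
      · calc infb b _ ≤ y := infb_le b (Finset.mem_filter.2 ⟨hy, hxy⟩)
          _ ≤ x ⊔ y := le_sup_right
      · have : x ⊔ y = b := by
          rcases (hT y hy).eq_or_eq (c := x ⊔ y) le_sup_right
            (sup_le hx (hT y hy).le) with h | h
          · exact absurd (h ▸ le_sup_left) hxy
          · exact h
        rw [this]; exact infb_le_b _ _

lemma sup_infb_eq_b {b s : L} {T : Finset L} (hs : s ⋖ b) (hT : ∀ t ∈ T, t ⋖ b) (hsT : s ∉ T) :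
    s ⊔ infb b T = b := by
  rw [sup_infb]
  have : ∀ y ∈ insert b T, s ⊔ y = b := by
    intro y hy
    rcases Finset.mem_insert.1 hy with rfl | hy
    · exact sup_eq_right.2 hs.le
    · rcases (hT y hy).eq_or_eq (c := s ⊔ y) le_sup_right
        (sup_le hs.le (hT y hy).le) with h | h
      · exfalso
        have hsy : s ≤ y := h ▸ le_sup_left
        rcases hs.eq_or_eq hsy (hT y hy).le with h' | h'
        · exact hsT (h' ▸ hy)
        · exact (hT y hy).ne h'
      · exact h
  apply le_antisymm
  · calc (insert b T).inf' _ (fun t => s ⊔ t) ≤ s ⊔ b :=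
        Finset.inf'_le _ (Finset.mem_insert_self b T)
      _ = b := this b (Finset.mem_insert_self b T)
  · apply Finset.le_inf'
    intro y hy
    rw [this y hy]

lemma infb_le_cover_iff {b s : L} {T : Finset L} (hs : s ⋖ b) (hT : ∀ t ∈ T, t ⋖ b) :
    infb b T ≤ s ↔ s ∈ T := by
  constructor
  · intro h
    by_contra hsT
    have hb := sup_infb_eq_b hs hT hsT
    have : (b : L) ≤ s := by
      rw [← hb]
      exact sup_le le_rfl h
    exact absurd (le_antisymm this hs.le) (Ne.symm hs.ne)
  · exact infb_le b

end Infb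

section Iso

variable {L : Type*} [DistribLattice L]

attribute [local instance] Classical.propDecidable

/-- Order isomorphism between the powersets of equivalent types. -/
noncomputable def setCongrIso {α β : Type*} (e : α ≃ β) : Set α ≃o Set β where
  toFun s := e '' s
  invFun s := e.symm '' s
  left_inv s := by simp [Set.image_image]
  right_inv s := by simp [Set.image_image]
  map_rel_iff' := Set.image_subset_image_iff e.injective

/-- The complement finset of a set of elements of `S`. -/
noncomputable def Kc {L : Type*} (S : Finset L) (T : Set {s // s ∈ S}) : Finset L :=
  (S.attach.filter (fun s => ↑s ∉ T)).image Subtype.val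

lemma mem_Kc {L : Type*} {S : Finset L} {T : Set {s // s ∈ S}} {z : L} :
    z ∈ Kc S T ↔ ∃ h : z ∈ S, (⟨z, h⟩ : {s // s ∈ S}) ∉ T := by
  simp [Kc]

lemma Kc_subset {S : Finset L} (T : Set {s // s ∈ S}) : Kc S T ⊆ S :=
  fun _ hz => (mem_Kc.1 hz).1

lemma Kc_of_le {S : Finset L} {x : L} :
    Kc S {s : {s // s ∈ S} | ¬ x ≤ ↑s} = S.filter (fun t => x ≤ t) := by
  ext z
  rw [mem_Kc, Finset.mem_filter]
  simp [exists_prop]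

lemma infb_Kc_of_mem {b : L} {S : Finset L} (hS : ∀ s ∈ S, s ⋖ b) {x : L}
    (hx1 : infb b S ≤ x) (hx2 : x ≤ b) :
    infb b (Kc S {s : {s // s ∈ S} | ¬ x ≤ ↑s}) = x := by
  rw [Kc_of_le, ← sup_infb_of_covers hS hx2]
  exact sup_eq_left.2 hx1

/-- The key order isomorphism: if `S` is a set of elements covered by `b` in a distributive
lattice, then the interval `[infb b S, b]` is isomorphic to the powerset of `S`. -/
noncomputable def boolIso (b : L) (S : Finset L) (hS : ∀ s ∈ S, s ⋖ b) :
    Set.Icc (infb b S) b ≃o Set {s // s ∈ S} where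
  toFun x := {s | ¬ (x : L) ≤ ↑s}
  invFun T := ⟨infb b (Kc S T),
    ⟨infb_mono (Kc_subset T), infb_le_b _ _⟩⟩
  left_inv := by
    rintro ⟨x, hx1, hx2⟩
    exact Subtype.ext (infb_Kc_of_mem hS hx1 hx2)
  right_inv := by
    intro T
    ext s
    show ¬ infb b (Kc S T) ≤ ↑s ↔ s ∈ T
    have hcov : ∀ t ∈ Kc S T, t ⋖ b := fun t ht => hS t (Kc_subset T ht)
    rw [infb_le_cover_iff (hS s s.2) hcov, mem_Kc]
    push_neg
    constructor
    · intro h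
      have := h s.2
      rwa [show (⟨(s : L), s.2⟩ : {s // s ∈ S}) = s from Subtype.ext rfl] at this
    · intro h hz
      rwa [show (⟨(s : L), hz⟩ : {s // s ∈ S}) = s from Subtype.ext rfl]
  map_rel_iff' := by
    rintro ⟨x, hx1, hx2⟩ ⟨y, hy1, hy2⟩
    constructor
    · intro h
      show x ≤ y
      have hKmono : Kc S {s : {s // s ∈ S} | ¬ y ≤ ↑s} ⊆ Kc S {s : {s // s ∈ S} | ¬ x ≤ ↑s} := by
        intro z hz
        rcases mem_Kc.1 hz with ⟨hzS, hn⟩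
        exact mem_Kc.2 ⟨hzS, fun hmem => hn (h hmem)⟩
      calc x = infb b (Kc S {s : {s // s ∈ S} | ¬ x ≤ ↑s}) := (infb_Kc_of_mem hS hx1 hx2).symm
        _ ≤ infb b (Kc S {s : {s // s ∈ S} | ¬ y ≤ ↑s}) := infb_mono hKmono
        _ = y := infb_Kc_of_mem hS hy1 hy2
    · intro h s hs
      intro hle
      exact hs (le_trans h hle)

end Iso

section Converse

variable {L : Type*} [DistribLattice L]

attribute [local instance] Classical.propDecidable

lemma icc_covBy_iff {a b : L} {x y : Set.Icc a b} : x ⋖ y ↔ (x : L) ⋖ (y : L) := by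
  have h : (Set.range ((OrderEmbedding.subtype (· ∈ Set.Icc a b)) :
      Set.Icc a b ↪o L)).OrdConnected := by
    have : Set.range ((OrderEmbedding.subtype (· ∈ Set.Icc a b)) : Set.Icc a b ↪o L)
        = Set.Icc a b := Subtype.range_coe_subtype
    rw [this]
    exact Set.ordConnected_Icc
  exact (Set.OrdConnected.apply_covBy_apply_iff _ h).symm

lemma exists_covers_of_iso {i : ℕ} {a b : L} (hab : a ≤ b)
    (e : Set.Icc a b ≃o Set (Fin i)) :
    ∃ S : Finset L, (∀ s ∈ S, s ⋖ b) ∧ S.card = i ∧ infb b S = a := by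
  have hbm : b ∈ Set.Icc a b := ⟨hab, le_rfl⟩
  have ham : a ∈ Set.Icc a b := ⟨le_rfl, hab⟩
  have htop : e ⟨b, hbm⟩ = Set.univ := by
    apply Set.eq_univ_of_univ_subset
    have h1 : e.symm Set.univ ≤ ⟨b, hbm⟩ := (e.symm Set.univ).2.2
    calc Set.univ = e (e.symm Set.univ) := (e.apply_symm_apply _).symm
      _ ⊆ e ⟨b, hbm⟩ := e.monotone h1
  set y : Fin i → L := fun j => ↑(e.symm {j}ᶜ) with hy
  have hymem : ∀ j, y j ∈ Set.Icc a b := fun j => (e.symm {j}ᶜ).2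
  have heyj : ∀ j, e ⟨y j, hymem j⟩ = ({j}ᶜ : Set (Fin i)) := by
    intro j
    have : (⟨y j, hymem j⟩ : Set.Icc a b) = e.symm {j}ᶜ := Subtype.ext rfl
    rw [this, e.apply_symm_apply]
  have hycov : ∀ j, y j ⋖ b := by
    intro j
    have h1 : ({j}ᶜ : Set (Fin i)) ⋖ Set.univ := by
      rw [← Set.top_eq_univ]
      exact covBy_top_iff.mpr (Set.isCoatom_singleton_compl j)
    rw [← htop, ← heyj j] at h1
    have h2 : (⟨y j, hymem j⟩ : Set.Icc a b) ⋖ ⟨b, hbm⟩ :=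
      (apply_covBy_apply_iff (e : Set.Icc a b ≃o Set (Fin i))).mp h1
    exact icc_covBy_iff.mp h2
  refine ⟨Finset.univ.image y, ?_, ?_, ?_⟩
  · intro s hs
    rcases Finset.mem_image.1 hs with ⟨j, _, rfl⟩
    exact hycov j
  · have hyinj : Function.Injective y := by
      intro j j' h
      have : e.symm {j}ᶜ = e.symm {j'}ᶜ := Subtype.ext h
      have h2 : ({j}ᶜ : Set (Fin i)) = {j'}ᶜ := e.symm.injective this
      have h3 : ({j} : Set (Fin i)) = {j'} := by
        rw [← compl_compl ({j} : Set (Fin i)), h2, compl_compl]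
      exact Set.singleton_eq_singleton_iff.1 h3
    rw [Finset.card_image_of_injective _ hyinj, Finset.card_univ, Fintype.card_fin]
  · set S : Finset L := Finset.univ.image y with hS
    have haleq : a ≤ infb b S := by
      apply le_infb hab
      intro s hs
      rcases Finset.mem_image.1 hs with ⟨j, _, rfl⟩
      exact (hymem j).1
    have hm : infb b S ∈ Set.Icc a b := ⟨haleq, infb_le_b _ _⟩
    have hempty : e ⟨infb b S, hm⟩ = ∅ := by
      rw [Set.eq_empty_iff_forall_notMem]
      intro j hj
      have hmle : infb b S ≤ y j := infb_le b (Finset.mem_image.2 ⟨j, Finset.mem_univ _, rfl⟩)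
      have : e ⟨infb b S, hm⟩ ⊆ e ⟨y j, hymem j⟩ := e.monotone hmle
      rw [heyj j] at this
      exact (this hj) rfl
    have : (⟨infb b S, hm⟩ : Set.Icc a b) ≤ ⟨a, ham⟩ := by
      have h1 : e ⟨infb b S, hm⟩ ⊆ e ⟨a, ham⟩ := by
        rw [hempty]; exact Set.empty_subset _
      exact e.le_iff_le.1 h1
    exact le_antisymm this haleq

end Converse

section Main

variable {L : Type*} [DistribLattice L] [Fintype L]

attribute [local instance] Classical.propDecidable

/-- Number of elements covered by `b`. -/
noncomputable def covN (b : L) : ℕ := (Finset.univ.filter (· ⋖ b)).card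

lemma fiber_card (i : ℕ) (b : L) :
    Nat.card {a : L | a ≤ b ∧ Nonempty (Set.Icc a b ≃o Set (Fin i))}
      = (covN b).choose i := by
  classical
  set C : Finset L := Finset.univ.filter (· ⋖ b) with hC
  have hmem : ∀ T : Finset L, T ∈ C.powersetCard i → (∀ s ∈ T, s ⋖ b) ∧ T.card = i := by
    intro T hT
    rcases Finset.mem_powersetCard.1 hT with ⟨hsub, hcard⟩
    exact ⟨fun s hs => (Finset.mem_filter.1 (hsub hs)).2, hcard⟩
  let f : {T // T ∈ C.powersetCard i} → {a : L | a ≤ b ∧ Nonempty (Set.Icc a b ≃o Set (Fin i))} :=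
    fun T => ⟨infb b T.1, infb_le_b _ _, ⟨(boolIso b T.1 (hmem T.1 T.2).1).trans
      (setCongrIso (T.1.equivFin.trans (finCongr (hmem T.1 T.2).2)))⟩⟩
  have hbij : Function.Bijective f := by
    constructor
    · rintro ⟨T, hT⟩ ⟨T', hT'⟩ h
      have h1 : infb b T = infb b T' := congrArg Subtype.val h
      apply Subtype.ext
      ext s
      constructor
      · intro hs
        have hscov : s ⋖ b := (hmem T hT).1 s hs
        exact (infb_le_cover_iff hscov (hmem T' hT').1).1 (h1 ▸ infb_le b hs)
      · intro hs
        have hscov : s ⋖ b := (hmem T' hT').1 s hs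
        exact (infb_le_cover_iff hscov (hmem T hT).1).1 (h1 ▸ infb_le b hs)
    · rintro ⟨a, hab, ⟨e⟩⟩
      rcases exists_covers_of_iso hab e with ⟨S, hScov, hScard, hSinf⟩
      have hSmem : S ∈ C.powersetCard i := by
        refine Finset.mem_powersetCard.2 ⟨?_, hScard⟩
        intro s hs
        exact Finset.mem_filter.2 ⟨Finset.mem_univ _, hScov s hs⟩
      exact ⟨⟨S, hSmem⟩, Subtype.ext hSinf⟩
  rw [← Nat.card_congr (Equiv.ofBijective f hbij), Nat.card_eq_finsetCard,
    Finset.card_powersetCard]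
  rfl

theorem card_boolean_intervals_distribLattice' (i : ℕ) :
    Nat.card {p : L × L | p.1 ≤ p.2 ∧
        Nonempty ((Set.Icc p.1 p.2) ≃o Set (Fin i))} =
      ∑ᶠ (j : ℕ) (_ : i ≤ j),
        Nat.choose j i * Nat.card {x : L | Nat.card {y : L | y ⋖ x} = j} := by
  classical
  -- left side: group by the top element
  have hsigma : Nat.card {p : L × L | p.1 ≤ p.2 ∧ Nonempty (Set.Icc p.1 p.2 ≃o Set (Fin i))}
      = ∑ b : L, Nat.card {a : L | a ≤ b ∧ Nonempty (Set.Icc a b ≃o Set (Fin i))} := by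
    let E : {p : L × L // p.1 ≤ p.2 ∧ Nonempty (Set.Icc p.1 p.2 ≃o Set (Fin i))}
        ≃ (b : L) × {a : L // a ≤ b ∧ Nonempty (Set.Icc a b ≃o Set (Fin i))} :=
      { toFun := fun p => ⟨p.1.2, ⟨p.1.1, p.2⟩⟩
        invFun := fun x => ⟨(x.2.1, x.1), x.2.2⟩
        left_inv := fun p => rfl
        right_inv := fun x => rfl }
    have e1 : Nat.card {p : L × L | p.1 ≤ p.2 ∧ Nonempty (Set.Icc p.1 p.2 ≃o Set (Fin i))}
        = Nat.card ((b : L) × {a : L // a ≤ b ∧ Nonempty (Set.Icc a b ≃o Set (Fin i))}) :=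
      Nat.card_congr E
    rw [e1, Nat.card_eq_fintype_card, Fintype.card_sigma]
    refine Finset.sum_congr rfl (fun b _ => ?_)
    rw [Nat.card_eq_fintype_card]
    exact Fintype.card_congr (Equiv.refl _)
  rw [hsigma]
  simp_rw [fiber_card i]
  -- right side
  have hN : ∀ x : L, Nat.card {y : L | y ⋖ x} = covN x := by
    intro x
    rw [Nat.card_eq_fintype_card]
    exact Fintype.card_subtype _
  have hg : ∀ j, Nat.card {x : L | Nat.card {y : L | y ⋖ x} = j}
      = (Finset.univ.filter (fun x : L => covN x = j)).card := by
    intro j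
    simp_rw [hN]
    rw [Nat.card_eq_fintype_card]
    exact Fintype.card_subtype _
  simp_rw [hg]
  set F : ℕ → ℕ := fun j => j.choose i * (Finset.univ.filter (fun x : L => covN x = j)).card with hF
  have h0 : ∀ j, ¬ i ≤ j → F j = 0 := by
    intro j h
    rw [hF]
    simp only
    rw [Nat.choose_eq_zero_of_lt (lt_of_not_ge h), zero_mul]
  have h1 : (∑ᶠ (j : ℕ) (_ : i ≤ j), F j) = ∑ᶠ j : ℕ, F j := by
    apply finsum_congr
    intro j
    rw [finsum_eq_if]
    split_ifs with h
    · rfl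
    · exact (h0 j h).symm
  rw [h1]
  have hsupp : Function.support F ⊆ ↑(Finset.univ.image (covN (L := L))) := by
    intro j hj
    have hcard : (Finset.univ.filter (fun x : L => covN x = j)).card ≠ 0 := by
      intro h
      apply hj
      rw [hF]
      simp only
      rw [h, mul_zero]
    rcases Finset.card_pos.1 (Nat.pos_of_ne_zero hcard) with ⟨x, hx⟩
    rcases Finset.mem_filter.1 hx with ⟨_, hx2⟩
    exact Finset.mem_coe.2 (Finset.mem_image.2 ⟨x, Finset.mem_univ _, hx2⟩)
  rw [finsum_eq_sum_of_support_subset F hsupp]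
  rw [Finset.sum_comp (fun j => j.choose i) (covN (L := L))]
  refine Finset.sum_congr rfl (fun j _ => ?_)
  rw [hF]
  simp only
  rw [smul_eq_mul, mul_comm]

end Main

/-- In a finite distributive lattice `L`, the number of intervals `[a, b]` that are
isomorphic as posets to the Boolean lattice of rank `i` (the lattice of subsets of an
`i`-element set) equals `∑_{j ≥ i} C(j, i) ⋅ g_j`, where `g_j` is the number of elements
of `L` covering exactly `j` elements. -/
theorem card_boolean_intervals_distribLattice {L : Type*} [DistribLattice L] [Fintype L]
    (i : ℕ) :
    Nat.card {p : L × L | p.1 ≤ p.2 ∧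
        Nonempty ((Set.Icc p.1 p.2) ≃o Set (Fin i))} =
      ∑ᶠ (j : ℕ) (_ : i ≤ j),
        Nat.choose j i * Nat.card {x : L | Nat.card {y : L | y ⋖ x} = j} :=
  card_boolean_intervals_distribLattice' i
end
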